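/- arXiv:2212.04312 — 4 statements merged into one kernel-verified Lean document; each statement's English description precedes it below -/
import Mathlib

section
/- Let q be a prime power, δ ∈ F_{q^2} with δ^{q+1} = 1, s(x) = x^q + δx, λ a nonzero element of the image of s, a_2, ..., a_{m-1} ∈ F_q, m > 1, and set g(s)(x) = s(x)^m + Σ_{i=2}^{m-1} λ^{m-i} a_i s(x)^i. Suppose γ ∈ F_q is nonzero and x ↦ x^m + Σ_{i=2}^{m-1} a_i x^i + γx is a bijection of F_q. Then there exists a rank 2 linearized polynomial L of F_{q^2} that does NOT map the kernel of s into F_q·λ^m such that f(x) = g(s)(x) + L(x) is a bijection of F_{q^2}. Moreover, if there are k distinct nonzero γ ∈ F_q for which x ↦ x^m + Σ_{i=2}^{m-1} a_i x^i + γx is a bijection of F_q, then there are at least k·q^2·(q-1) distinct such rank 2 linearized polynomials L. -/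
lemma frobq (q : ℕ) (hq : IsPrimePow q)
    (F : Type) [Field F] [Fintype F] (hF : Fintype.card F = q ^ 2) :
    ∃ φ : F →+* F, ∀ x : F, φ x = x ^ q := by
  obtain ⟨p, n, hp, hn, rfl⟩ := hq
  rw [← Nat.prime_iff] at hp
  have hnt : Nontrivial F := by
    apply Fintype.one_lt_card_iff_nontrivial.mp
    rw [hF]
    have : 1 < p ^ n := Nat.one_lt_pow hn.ne' hp.one_lt
    nlinarith
  haveI : CharP F (ringChar F) := ringChar.charP F
  have hr : (ringChar F).Prime := CharP.char_is_prime F (ringChar F)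
  obtain ⟨k, hk, hcard⟩ := FiniteField.card F (ringChar F)
  have hrp : ringChar F = p := by
    have h1 : ringChar F ∣ (p ^ n) ^ 2 := by
      rw [← hF, hcard]
      exact dvd_pow_self _ (by positivity)
    have h2 : ringChar F ∣ p := hr.dvd_of_dvd_pow (hr.dvd_of_dvd_pow h1)
    exact (Nat.prime_dvd_prime_iff_eq hr hp).mp h2
  haveI : CharP F p := hrp ▸ (ringChar.charP F)
  haveI : ExpChar F p := ExpChar.prime hp
  exact ⟨iterateFrobenius F p n, fun x => iterateFrobenius_def p n x⟩


lemma gen_facts (q : ℕ) (hq2 : 2 ≤ q)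
    (F : Type) [Field F] [Fintype F] (hF : Fintype.card F = q ^ 2) :
    ∃ g : Fˣ, (∀ x : Fˣ, x ∈ Submonoid.powers g) ∧ orderOf g = q ^ 2 - 1 := by
  classical
  obtain ⟨g, hg⟩ := IsCyclic.exists_monoid_generator (α := Fˣ)
  refine ⟨g, hg, ?_⟩
  have := orderOf_eq_card_of_forall_mem_zpowers
    (fun x : Fˣ => Subgroup.mem_zpowers_iff.mpr (by
      obtain ⟨k, hk⟩ := hg x
      exact ⟨(k : ℤ), by rw [zpow_natCast]; exact hk⟩))
  rw [this, Nat.card_eq_fintype_card, Fintype.card_units, hF]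

lemma sq_sub_one (q : ℕ) (hq2 : 2 ≤ q) : q ^ 2 - 1 = (q+1)*(q-1) := by
  cases q with
  | zero => omega
  | succ q' => simp [pow_two]; ring_nf; omega

lemma pow_surj (q : ℕ) (hq2 : 2 ≤ q)
    (F : Type) [Field F] [Fintype F] (hF : Fintype.card F = q ^ 2)
    (y : F) (hy : y ^ (q + 1) = 1) : ∃ x : F, x ≠ 0 ∧ x ^ (q - 1) = y := by
  obtain ⟨g, hg, horder⟩ := gen_facts q hq2 F hF
  have hy0 : y ≠ 0 := by
    intro h; rw [h, zero_pow (by omega)] at hy; exact zero_ne_one hy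
  obtain ⟨k, hk⟩ := hg (Units.mk0 y hy0)
  simp only at hk
  have hgk : ((q+1)*(q-1)) ∣ k * (q + 1) := by
    have h1 : g ^ (k * (q + 1)) = 1 := by
      rw [pow_mul, hk]
      ext
      push_cast
      exact hy
    have h2 := orderOf_dvd_of_pow_eq_one h1
    rw [horder, sq_sub_one q hq2] at h2
    exact h2
  have hdvd : (q - 1) ∣ k := by
    rcases hgk with ⟨c, hc⟩
    have hq1 : 0 < q + 1 := by omega
    have : k * (q+1) = ((q-1)*c) * (q+1) := by rw [hc]; ring
    exact ⟨c, Nat.eq_of_mul_eq_mul_right hq1 this⟩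
  obtain ⟨j, rfl⟩ := hdvd
  refine ⟨(g : F) ^ j, pow_ne_zero _ (Units.ne_zero g), ?_⟩
  have h3 : ((g ^ j) ^ (q-1) : Fˣ) = Units.mk0 y hy0 := by
    rw [← hk, ← pow_mul, mul_comm]
  calc ((g:F) ^ j) ^ (q-1) = (((g ^ j)^(q-1) : Fˣ) : F) := by push_cast; ring
    _ = y := by rw [h3]; rfl


open Finset in
lemma card_fixed (q : ℕ) (hq2 : 2 ≤ q)
    (F : Type) [Field F] [Fintype F] [DecidableEq F] (hF : Fintype.card F = q ^ 2)
    (g : Fˣ) (hg : ∀ x : Fˣ, x ∈ Submonoid.powers g) (horder : orderOf g = q ^ 2 - 1) :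
    (Finset.univ.filter fun x : F => x ^ q = x).card = q := by
  classical
  have hsq : q ^ 2 - 1 = (q+1)*(q-1) := by
    cases q with
    | zero => omega
    | succ q' => simp [pow_two]; ring_nf; omega
  set U : Finset Fˣ := Finset.univ.filter (fun u : Fˣ => u ^ (q-1) = 1) with hU
  have hUeq : U = (Finset.range (q-1)).image (fun j => g ^ ((q+1)*j)) := by
    ext u
    simp only [hU, mem_filter, mem_univ, true_and, mem_image, mem_range]
    constructor
    · intro hu
      obtain ⟨k, hk⟩ := hg u
      simp only at hk
      have h1 : g ^ (k * (q-1)) = 1 := by rw [pow_mul, hk, hu]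
      have h2 := orderOf_dvd_of_pow_eq_one h1
      rw [horder, hsq] at h2
      have hdvd : (q + 1) ∣ k := by
        rcases h2 with ⟨c, hc⟩
        have : k * (q-1) = ((q+1)*c) * (q-1) := by rw [hc]; ring
        exact ⟨c, Nat.eq_of_mul_eq_mul_right (by omega) this⟩
      obtain ⟨j, rfl⟩ := hdvd
      refine ⟨j % (q-1), Nat.mod_lt _ (by omega), ?_⟩
      rw [← hk, pow_eq_pow_iff_modEq, horder, hsq]
      exact Nat.ModEq.mul_left' (q+1) (Nat.mod_modEq j (q-1))
    · rintro ⟨j, hj, rfl⟩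
      rw [← pow_mul]
      have : (q+1)*j*(q-1) = (q^2-1) * j := by rw [hsq]; ring
      rw [this, pow_mul, ← horder, pow_orderOf_eq_one, one_pow]
  have hUcard : U.card = q - 1 := by
    rw [hUeq, Finset.card_image_of_injOn, Finset.card_range]
    intro j₁ h₁ j₂ h₂ h
    simp only [mem_coe, mem_range] at h₁ h₂
    rw [pow_eq_pow_iff_modEq, horder, hsq] at h
    have h' := Nat.ModEq.mul_left_cancel' (a := j₁) (b := j₂) (m := q - 1)
      (c := q+1) (by omega) h
    rw [Nat.ModEq] at h'
    rwa [Nat.mod_eq_of_lt h₁, Nat.mod_eq_of_lt h₂] at h'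
  have hSeq : (Finset.univ.filter fun x : F => x ^ q = x)
      = insert (0 : F) (U.image (Units.val)) := by
    ext x
    simp only [mem_filter, mem_univ, true_and, mem_insert, mem_image, hU]
    constructor
    · intro hx
      by_cases hx0 : x = 0
      · exact Or.inl hx0
      · refine Or.inr ⟨Units.mk0 x hx0, ?_, rfl⟩
        have hpow : x ^ (q-1) * x = x ^ q := by
          rw [← pow_succ]; congr 1; omega
        have hx1 : x ^ (q - 1) = 1 := by
          have : x ^ (q-1) * x = 1 * x := by rw [hpow, hx, one_mul]
          exact mul_right_cancel₀ hx0 this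
        ext
        push_cast
        exact hx1
    · rintro (rfl | ⟨u, hu, rfl⟩)
      · rw [zero_pow (by omega)]
      · have h1 : (u : F) ^ (q - 1) = 1 := by
          have := congrArg (Units.val) hu
          push_cast at this
          exact this
        calc (u:F) ^ q = (u:F)^(q-1) * u := by rw [← pow_succ]; congr 1; omega
          _ = u := by rw [h1, one_mul]
  rw [hSeq, Finset.card_insert_of_notMem, Finset.card_image_of_injective _ Units.val_injective,
    hUcard]
  · omega
  · simp only [mem_image]
    rintro ⟨u, _, hu⟩
    exact Units.ne_zero u hu

lemma stmt16_aux (q : ℕ) (hq : IsPrimePow q)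
    (F : Type) [Field F] [Fintype F] (hF : Fintype.card F = q ^ 2)
    (δ : F) (hδ : δ ^ (q + 1) = 1)
    (lam : F) (hlam0 : lam ≠ 0)
    (m : ℕ) (hm : 1 < m)
    (a : ℕ → F) (ha : ∀ i, (a i) ^ q = a i)
    (u₀ : F) (hu₀ : u₀ ≠ 0) (hu : u₀ ^ q + δ * u₀ = 0)
    (w : F) (hw : w ^ q + δ * w = lam)
    (γ' : F) (hγq : γ' ^ q = γ') (hγ0 : γ' ≠ 0)
    (hperm : Set.BijOn (fun x : F => x ^ m + (∑ i ∈ Finset.Ico 2 m, a i * x ^ i) + γ' * x)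
      {x : F | x ^ q = x} {x : F | x ^ q = x})
    (v : F) (hv : ¬∃ c : F, c ^ q = c ∧ v = c * lam ^ m)
    (d : F) (hd : d ^ q = d) :
    ∃ α β : F, β ^ (q + 1) ≠ α ^ (q + 1) ∧
      (α * u₀ ^ q + β * u₀ = v) ∧
      (α * w ^ q + β * w = γ' * lam ^ m + d * v) ∧
      ¬ (∀ u : F, u ^ q + δ * u = 0 →
          ∃ c : F, c ^ q = c ∧ α * u ^ q + β * u = c * lam ^ m) ∧
      Function.Bijective (fun x : F =>
        (x ^ q + δ * x) ^ m
          + (∑ i ∈ Finset.Ico 2 m, lam ^ (m - i) * a i * (x ^ q + δ * x) ^ i)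
          + (α * x ^ q + β * x)) := by
  classical
  obtain ⟨φ, hφ⟩ := frobq q hq F hF
  have hq2 : 2 ≤ q := hq.two_le
  have hq0 : q ≠ 0 := by omega
  have hδ0 : δ ≠ 0 := by
    intro h; rw [h, zero_pow (by omega)] at hδ; exact zero_ne_one hδ
  have hδq0 : δ ^ q ≠ 0 := pow_ne_zero _ hδ0
  have hcard : ∀ x : F, (x ^ q) ^ q = x := by
    intro x
    have := FiniteField.pow_card x
    rw [hF] at this
    rw [← pow_mul, ← pow_two]
    exact this
  have hδ' : δ ^ q * δ = 1 := by rw [← pow_succ]; exact hδ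
  -- s(x)^q = δ^q ⬝ s(x)
  have hs_pow : ∀ x : F, (x ^ q + δ * x) ^ q = δ ^ q * (x ^ q + δ * x) := by
    intro x
    rw [← hφ, map_add, map_mul, hφ, hφ, hφ, hcard]
    linear_combination (-x) * hδ'
  have hlamq : lam ^ q = δ ^ q * lam := by rw [← hw]; exact hs_pow w
  set t : F → F := fun x => (x ^ q + δ * x) / lam with htdef
  have ht : ∀ x : F, (t x) ^ q = t x := by
    intro x
    rw [htdef]
    simp only [div_pow]
    rw [hs_pow, hlamq, mul_div_mul_left _ _ hδq0]
  have hts : ∀ x : F, x ^ q + δ * x = t x * lam := by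
    intro x; rw [htdef]; field_simp
  have hu0q : u₀ ^ q = -(δ * u₀) := by linear_combination hu
  -- kernel decomposition
  set c : F → F := fun x => (x - t x * w) / u₀ with hcdef
  have hker : ∀ x : F, (x - t x * w) ^ q = -(δ * (x - t x * w)) := by
    intro x
    rw [← hφ, map_sub, map_mul, hφ, hφ, hφ]
    have hx' : x ^ q = t x * lam - δ * x := by linear_combination hts x
    have hw' : w ^ q = lam - δ * w := by linear_combination hw
    rw [hx', hw', ht]
    ring
  have hcq : ∀ x : F, (c x) ^ q = c x := by
    intro x
    rw [hcdef]
    simp only [div_pow]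
    rw [hker x, hu0q]
    rw [neg_div_neg_eq, mul_div_mul_left _ _ hδ0]
  have hdecomp : ∀ x : F, x = t x * w + c x * u₀ := by
    intro x
    rw [hcdef]
    field_simp
    ring
  -- the Cramer data
  set D : F := u₀ ^ q * w - u₀ * w ^ q with hDdef
  have hD : D ≠ 0 := by
    intro h0
    have h1 : u₀ * (w ^ q + δ * w) = 0 := by
      rw [hDdef] at h0
      linear_combination (-1 : F) * h0 + w * hu
    rcases mul_eq_zero.mp h1 with h | h
    · exact hu₀ h
    · rw [hw] at h; exact hlam0 h
  set R : F := γ' * lam ^ m + d * v with hRdef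
  refine ⟨(v * w - R * u₀) / D, (u₀ ^ q * R - w ^ q * v) / D, ?_⟩
  set α : F := (v * w - R * u₀) / D with hαdef
  set β : F := (u₀ ^ q * R - w ^ q * v) / D with hβdef
  have hLu : α * u₀ ^ q + β * u₀ = v := by
    have hD' : u₀ ^ q * w - u₀ * w ^ q ≠ 0 := hD
    rw [hαdef, hβdef, hDdef]
    rw [div_mul_eq_mul_div, div_mul_eq_mul_div, ← add_div, div_eq_iff hD']
    ring
  have hLw : α * w ^ q + β * w = R := by
    have hD' : u₀ ^ q * w - u₀ * w ^ q ≠ 0 := hD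
    rw [hαdef, hβdef, hDdef]
    rw [div_mul_eq_mul_div, div_mul_eq_mul_div, ← add_div, div_eq_iff hD']
    ring
  have hv0 : v ≠ 0 := by
    intro h
    exact hv ⟨0, by rw [zero_pow hq0], by rw [h, zero_mul]⟩
  -- value of L on a general element
  have hLval : ∀ x : F, α * x ^ q + β * x = t x * R + c x * v := by
    intro x
    have hxq : x ^ q = t x * w ^ q + c x * u₀ ^ q := by
      have h1 : φ (t x * w + c x * u₀) = φ (t x) * φ w + φ (c x) * φ u₀ := by
        rw [map_add, map_mul, map_mul]
      rw [← hdecomp x] at h1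
      simp only [hφ] at h1
      rw [ht, hcq] at h1
      exact h1
    linear_combination α * hxq + β * hdecomp x + t x * hLw + c x * hLu
  -- independence of lam^m and v over F_q
  have hindep : ∀ A B : F, A ^ q = A → B ^ q = B → A * lam ^ m + B * v = 0 →
      A = 0 ∧ B = 0 := by
    intro A B hA hB h
    by_cases hB0 : B = 0
    · refine ⟨?_, hB0⟩
      rw [hB0, zero_mul, add_zero] at h
      exact (mul_eq_zero.mp h).resolve_right (pow_ne_zero _ hlam0)
    · exfalso
      apply hv
      refine ⟨-A / B, ?_, ?_⟩
      · rw [div_pow, ← hφ, map_neg, hφ, hA, hB]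
      · field_simp
        linear_combination h
  -- closure of the F_q-polynomial under Frobenius
  have hΨq : ∀ y : F, y ^ q = y →
      (y ^ m + (∑ i ∈ Finset.Ico 2 m, a i * y ^ i) + γ' * y) ^ q
        = y ^ m + (∑ i ∈ Finset.Ico 2 m, a i * y ^ i) + γ' * y := by
    intro y hy
    have hterm : ∀ i ∈ Finset.Ico 2 m, φ (a i * y ^ i) = a i * y ^ i := by
      intro i _
      rw [map_mul, map_pow, hφ, hφ, ha, hy]
    rw [← hφ, map_add, map_add, map_pow, map_mul, map_sum, Finset.sum_congr rfl hterm]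
    simp only [hφ]
    rw [hy, hγq]
  have hΨinj : ∀ y z : F, y ^ q = y → z ^ q = z →
      (y ^ m + (∑ i ∈ Finset.Ico 2 m, a i * y ^ i) + γ' * y)
        = (z ^ m + (∑ i ∈ Finset.Ico 2 m, a i * z ^ i) + γ' * z) → y = z := by
    intro y z hy hz hyz
    exact hperm.injOn hy hz hyz
  -- the g-part in terms of t
  have hgpart : ∀ x : F, (x ^ q + δ * x) ^ m
      + (∑ i ∈ Finset.Ico 2 m, lam ^ (m - i) * a i * (x ^ q + δ * x) ^ i)
      = lam ^ m * ((t x) ^ m + ∑ i ∈ Finset.Ico 2 m, a i * (t x) ^ i) := by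
    intro x
    rw [hts x, mul_pow]
    have hsum : ∀ i ∈ Finset.Ico 2 m, lam ^ (m - i) * a i * (t x * lam) ^ i
        = lam ^ m * (a i * (t x) ^ i) := by
      intro i hi
      rw [Finset.mem_Ico] at hi
      have hmi : lam ^ (m-i) * lam ^ i = lam ^ m := by
        rw [← pow_add]; congr 1; omega
      calc lam ^ (m-i) * a i * (t x * lam) ^ i
          = (lam ^ (m-i) * lam ^ i) * (a i * (t x) ^ i) := by rw [mul_pow]; ring
        _ = lam ^ m * (a i * (t x) ^ i) := by rw [hmi]
    rw [Finset.sum_congr rfl hsum, ← Finset.mul_sum]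
    ring
  -- value of f
  have hfval : ∀ x : F, (x ^ q + δ * x) ^ m
      + (∑ i ∈ Finset.Ico 2 m, lam ^ (m - i) * a i * (x ^ q + δ * x) ^ i)
      + (α * x ^ q + β * x)
      = lam ^ m * ((t x) ^ m + (∑ i ∈ Finset.Ico 2 m, a i * (t x) ^ i) + γ' * (t x))
        + (d * t x + c x) * v := by
    intro x
    rw [add_assoc, ← add_assoc ((x ^ q + δ * x) ^ m), hgpart x, hLval x, hRdef]
    ring
  -- injectivity of f
  have hinj : Function.Injective (fun x : F =>
      (x ^ q + δ * x) ^ m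
        + (∑ i ∈ Finset.Ico 2 m, lam ^ (m - i) * a i * (x ^ q + δ * x) ^ i)
        + (α * x ^ q + β * x)) := by
    intro x y hxy
    simp only at hxy
    rw [hfval x, hfval y] at hxy
    set Px : F := (t x) ^ m + (∑ i ∈ Finset.Ico 2 m, a i * (t x) ^ i) + γ' * (t x) with hPx
    set Py : F := (t y) ^ m + (∑ i ∈ Finset.Ico 2 m, a i * (t y) ^ i) + γ' * (t y) with hPy
    have hA : (Px - Py) ^ q = Px - Py := by
      have h1 : φ (Px - Py) = φ Px - φ Py := map_sub φ _ _
      rw [hφ, hφ, hφ] at h1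
      rw [h1, hPx, hPy, hΨq _ (ht x), hΨq _ (ht y)]
    have hB : ((d * t x + c x) - (d * t y + c y)) ^ q
        = (d * t x + c x) - (d * t y + c y) := by
      have h1 : φ ((d * t x + c x) - (d * t y + c y))
          = φ d * φ (t x) + φ (c x) - (φ d * φ (t y) + φ (c y)) := by
        rw [map_sub, map_add, map_add, map_mul, map_mul]
      simp only [hφ] at h1
      rw [h1, hd, ht, ht, hcq, hcq]
    have heq0 : (Px - Py) * lam ^ m + ((d * t x + c x) - (d * t y + c y)) * v = 0 := by
      linear_combination hxy
    obtain ⟨h1, h2⟩ := hindep _ _ hA hB heq0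
    have htxy : t x = t y := hΨinj _ _ (ht x) (ht y) (by rw [← hPx, ← hPy]; exact sub_eq_zero.mp h1)
    have hcxy : c x = c y := by linear_combination h2 - d * htxy
    rw [hdecomp x, hdecomp y, htxy, hcxy]
  have hbij := (Finite.injective_iff_bijective).mp hinj
  -- L is injective, hence rank 2
  have hLinj0 : ∀ z : F, α * z ^ q + β * z = 0 → z = 0 := by
    intro z hz
    rw [hLval z, hRdef] at hz
    have hz' : (γ' * t z) * lam ^ m + (d * t z + c z) * v = 0 := by linear_combination hz
    have hA : (γ' * t z) ^ q = γ' * t z := by rw [mul_pow, hγq, ht]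
    have hB : (d * t z + c z) ^ q = d * t z + c z := by
      have h1 : φ (d * t z + c z) = φ d * φ (t z) + φ (c z) := by rw [map_add, map_mul]
      simp only [hφ] at h1
      rw [h1, hd, ht, hcq]
    obtain ⟨h1, h2⟩ := hindep _ _ hA hB hz'
    have ht0 : t z = 0 := by
      rcases mul_eq_zero.mp h1 with h | h
      · exact absurd h hγ0
      · exact h
    have hc0 : c z = 0 := by rw [ht0, mul_zero, zero_add] at h2; exact h2
    rw [hdecomp z, ht0, hc0]; ring
  have hαβ : β ^ (q+1) ≠ α ^ (q+1) := by
    intro heq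
    by_cases hα : α = 0
    · have hβ : β = 0 := by
        rw [hα, zero_pow (by omega : q + 1 ≠ 0)] at heq
        exact pow_eq_zero_iff (by omega : q + 1 ≠ 0) |>.mp heq
      apply hv0
      rw [← hLu, hα, hβ]; ring
    · have hy : (-(β/α)) ^ (q+1) = 1 := by
        have hq1 : ((-1 : F)) ^ q = -1 := by
          have h2 := map_neg φ 1
          rw [map_one] at h2
          rw [← hφ, h2]
        have h1 : (-(1:F)) ^ (q+1) = 1 := by rw [pow_succ, hq1]; ring
        have h3 : (-(β/α)) ^ (q+1) = (-1 : F) ^ (q+1) * (β/α) ^ (q+1) := by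
          rw [← neg_one_mul, mul_pow]
        rw [h3, h1, one_mul, div_pow, heq, div_self (pow_ne_zero _ hα)]
      obtain ⟨x, hx0, hxq⟩ := pow_surj q hq2 F hF _ hy
      apply hx0
      apply hLinj0
      have hxq' : x ^ q = -(β/α) * x := by
        have h4 : x ^ (q-1) * x = x ^ q := by
          rw [← pow_succ]; congr 1; omega
        rw [← h4, hxq]
      rw [hxq']
      field_simp
      ring
  -- not mapping kernel into F_q lam^m
  have hnot : ¬ (∀ u : F, u ^ q + δ * u = 0 →
      ∃ cc : F, cc ^ q = cc ∧ α * u ^ q + β * u = cc * lam ^ m) := by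
    intro hall
    obtain ⟨cc, hcc, hccv⟩ := hall u₀ hu
    exact hv ⟨cc, hcc, by rw [← hLu]; exact hccv⟩
  exact ⟨hαβ, hLu, hLw, hnot, hbij⟩




/-- Let `δ^{q+1} = 1`, `s(x) = x^q + δx`, `lam` a nonzero element of the
image of `s`, `a_2, ..., a_{m-1} ∈ F_q`, `m > 1`, and
`g(s)(x) = s(x)^m + Σ_{i=2}^{m-1} lam^{m-i} a_i s(x)^i`. If `γ ∈ F_q` is nonzero and
`x ↦ x^m + Σ_{i=2}^{m-1} a_i x^i + γx` is a bijection of `F_q`, then there exists a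
rank 2 linearized polynomial `L` NOT mapping `ker s` into `F_q·lam^m` with
`f(x) = g(s)(x) + L(x)` a bijection of `F_{q^2}`. Moreover, if there are `k` distinct
such nonzero `γ`, then there are at least `k·q^2·(q-1)` such `L`. -/
theorem stmt_16 (q : ℕ) (hq : IsPrimePow q)
    (F : Type) [Field F] [Fintype F] (hF : Fintype.card F = q ^ 2)
    (δ : F) (hδ : δ ^ (q + 1) = 1)
    (lam : F) (hlam0 : lam ≠ 0) (hlam : ∃ w : F, w ^ q + δ * w = lam)
    (m : ℕ) (hm : 1 < m)
    (a : ℕ → F) (ha : ∀ i, (a i) ^ q = a i)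
    (γ : F) (hγq : γ ^ q = γ) (hγ0 : γ ≠ 0)
    (hperm : Set.BijOn
      (fun x : F => x ^ m + (∑ i ∈ Finset.Ico 2 m, a i * x ^ i) + γ * x)
      {x : F | x ^ q = x} {x : F | x ^ q = x}) :
    (∃ α β : F, β ^ (q + 1) ≠ α ^ (q + 1) ∧
        ¬ (∀ u : F, u ^ q + δ * u = 0 →
            ∃ c : F, c ^ q = c ∧ α * u ^ q + β * u = c * lam ^ m) ∧
        Function.Bijective (fun x : F =>
          (x ^ q + δ * x) ^ m
            + (∑ i ∈ Finset.Ico 2 m, lam ^ (m - i) * a i * (x ^ q + δ * x) ^ i)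
            + (α * x ^ q + β * x)))
    ∧ ∀ (Γ : Finset F) (k : ℕ), Γ.card = k →
        (∀ γ' ∈ Γ, γ' ^ q = γ' ∧ γ' ≠ 0 ∧
          Set.BijOn
            (fun x : F => x ^ m + (∑ i ∈ Finset.Ico 2 m, a i * x ^ i) + γ' * x)
            {x : F | x ^ q = x} {x : F | x ^ q = x}) →
        k * q ^ 2 * (q - 1) ≤
          Set.ncard {L : F → F | ∃ α β : F, β ^ (q + 1) ≠ α ^ (q + 1) ∧
            (L = fun x : F => α * x ^ q + β * x) ∧
            ¬ (∀ u : F, u ^ q + δ * u = 0 →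
                ∃ c : F, c ^ q = c ∧ L u = c * lam ^ m) ∧
            Function.Bijective (fun x : F =>
              (x ^ q + δ * x) ^ m
                + (∑ i ∈ Finset.Ico 2 m, lam ^ (m - i) * a i * (x ^ q + δ * x) ^ i)
                + L x)} := by
  classical
  have hq2 : 2 ≤ q := hq.two_le
  have hq0 : q ≠ 0 := by omega
  obtain ⟨φ, hφ⟩ := frobq q hq F hF
  have hδ0 : δ ≠ 0 := by
    intro h; rw [h, zero_pow (by omega : q + 1 ≠ 0)] at hδ; exact zero_ne_one hδ
  have hq1 : ((-1 : F)) ^ q = -1 := by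
    have h2 := map_neg φ 1
    rw [map_one] at h2
    rw [← hφ, h2]
  -- a nonzero kernel element u₀
  have hnegδ : (-δ) ^ (q + 1) = 1 := by
    have h3 : (-δ) ^ (q+1) = (-1 : F) ^ (q+1) * δ ^ (q+1) := by
      rw [← neg_one_mul, mul_pow]
    rw [h3, hδ, pow_succ, hq1]; ring
  obtain ⟨u₀, hu₀0, hu₀pow⟩ := pow_surj q hq2 F hF (-δ) hnegδ
  have hu : u₀ ^ q + δ * u₀ = 0 := by
    have h4 : u₀ ^ (q-1) * u₀ = u₀ ^ q := by rw [← pow_succ]; congr 1; omega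
    rw [← h4, hu₀pow]; ring
  obtain ⟨w, hw⟩ := hlam
  -- counting the F_q-line
  obtain ⟨g, hg, horder⟩ := gen_facts q hq2 F hF
  have hcardFq : (Finset.univ.filter fun x : F => x ^ q = x).card = q :=
    card_fixed q hq2 F hF g hg horder
  set line : Finset F :=
    (Finset.univ.filter fun x : F => x ^ q = x).image (fun cc => cc * lam ^ m) with hlinedef
  have hlinecard : line.card = q := by
    rw [hlinedef, Finset.card_image_of_injective _ (mul_left_injective₀ (pow_ne_zero m hlam0)),
      hcardFq]
  have hmemline : ∀ vv : F, vv ∈ line ↔ ∃ cc : F, cc ^ q = cc ∧ vv = cc * lam ^ m := by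
    intro vv
    simp only [hlinedef, Finset.mem_image, Finset.mem_filter, Finset.mem_univ, true_and]
    constructor
    · rintro ⟨cc, h1, h2⟩; exact ⟨cc, h1, h2.symm⟩
    · rintro ⟨cc, h1, h2⟩; exact ⟨cc, h1, h2.symm⟩
  set Vset : Finset F :=
    Finset.univ.filter (fun vv : F => ¬∃ cc : F, cc ^ q = cc ∧ vv = cc * lam ^ m) with hVdef
  have hVeq : Vset = lineᶜ := by
    ext vv
    simp only [hVdef, Finset.mem_filter, Finset.mem_univ, true_and, Finset.mem_compl, hmemline]
  have hVcard : Vset.card = q ^ 2 - q := by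
    rw [hVeq, Finset.card_compl, hlinecard, hF]
  have hVpos : 0 < Vset.card := by
    rw [hVcard]
    have : q < q ^ 2 := by nlinarith
    omega
  -- independence over F_q
  have hindep : ∀ v : F, (¬∃ cc : F, cc ^ q = cc ∧ v = cc * lam ^ m) →
      ∀ A B : F, A ^ q = A → B ^ q = B → A * lam ^ m + B * v = 0 → A = 0 ∧ B = 0 := by
    intro v hv A B hA hB h
    by_cases hB0 : B = 0
    · refine ⟨?_, hB0⟩
      rw [hB0, zero_mul, add_zero] at h
      exact (mul_eq_zero.mp h).resolve_right (pow_ne_zero _ hlam0)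
    · exfalso
      apply hv
      refine ⟨-A / B, ?_, ?_⟩
      · rw [div_pow, ← hφ, map_neg, hφ, hA, hB]
      · field_simp
        linear_combination h
  constructor
  · -- part 1
    obtain ⟨v, hvmem⟩ := Finset.card_pos.mp hVpos
    rw [hVdef, Finset.mem_filter] at hvmem
    obtain ⟨α, β, h1, _, _, h4, h5⟩ := stmt16_aux q hq F hF δ hδ lam hlam0 m hm a ha
      u₀ hu₀0 hu w hw γ hγq hγ0 hperm v hvmem.2 0 (by rw [zero_pow hq0])
    exact ⟨α, β, h1, h4, h5⟩
  · -- part 2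
    intro Γ k hk hΓ
    set Dset : Finset F := Finset.univ.filter (fun dd : F => dd ^ q = dd) with hDdef
    have hDcard : Dset.card = q := hcardFq
    set S : Set (F → F) := {L : F → F | ∃ α β : F, β ^ (q + 1) ≠ α ^ (q + 1) ∧
            (L = fun x : F => α * x ^ q + β * x) ∧
            ¬ (∀ u : F, u ^ q + δ * u = 0 →
                ∃ c : F, c ^ q = c ∧ L u = c * lam ^ m) ∧
            Function.Bijective (fun x : F =>
              (x ^ q + δ * x) ^ m
                + (∑ i ∈ Finset.Ico 2 m, lam ^ (m - i) * a i * (x ^ q + δ * x) ^ i)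
                + L x)} with hSdef
    have key : ∀ p ∈ Γ ×ˢ Vset ×ˢ Dset, ∃ L : F → F,
        L ∈ S ∧ L u₀ = p.2.1 ∧ L w = p.1 * lam ^ m + p.2.2 * p.2.1 := by
      intro p hp
      rw [Finset.mem_product] at hp
      obtain ⟨hp1, hp2⟩ := hp
      rw [Finset.mem_product] at hp2
      obtain ⟨hp21, hp22⟩ := hp2
      obtain ⟨hγ'q, hγ'0, hperm'⟩ := hΓ p.1 hp1
      rw [hVdef, Finset.mem_filter] at hp21
      rw [hDdef, Finset.mem_filter] at hp22
      obtain ⟨α, β, h1, h2, h3, h4, h5⟩ := stmt16_aux q hq F hF δ hδ lam hlam0 m hm a ha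
        u₀ hu₀0 hu w hw p.1 hγ'q hγ'0 hperm' p.2.1 hp21.2 p.2.2 hp22.2
      refine ⟨fun x => α * x ^ q + β * x, ?_, h2, h3⟩
      rw [hSdef]
      refine ⟨α, β, h1, rfl, ?_, ?_⟩
      · simpa using h4
      · exact h5
    choose Lf hLfS hLfu hLfw using key
    set T : Finset (F → F) := (Γ ×ˢ Vset ×ˢ Dset).attach.image
      (fun p => Lf p.1 p.2) with hTdef
    have hinjT : Set.InjOn (fun p : {x // x ∈ Γ ×ˢ Vset ×ˢ Dset} => Lf p.1 p.2)
        ((Γ ×ˢ Vset ×ˢ Dset).attach : Finset _) := by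
      intro p _ r _ hpr
      simp only at hpr
      have hvp := hLfu p.1 p.2
      have hvr := hLfu r.1 r.2
      have hveq : (p.1).2.1 = (r.1).2.1 := by rw [← hvp, ← hvr, hpr]
      have hwp := hLfw p.1 p.2
      have hwr := hLfw r.1 r.2
      have hw2 : (p.1).1 * lam ^ m + (p.1).2.2 * (p.1).2.1
          = (r.1).1 * lam ^ m + (r.1).2.2 * (p.1).2.1 := by
        rw [← hwp, hpr, hwr, hveq]
      -- memberships
      have hpmem := p.2
      have hrmem := r.2
      rw [Finset.mem_product] at hpmem hrmem
      have hpmem2 := hpmem.2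
      have hrmem2 := hrmem.2
      rw [Finset.mem_product] at hpmem2 hrmem2
      have hγp : (p.1).1 ^ q = (p.1).1 := (hΓ _ hpmem.1).1
      have hγr : (r.1).1 ^ q = (r.1).1 := (hΓ _ hrmem.1).1
      have hdp : (p.1).2.2 ^ q = (p.1).2.2 := by
        have := hpmem2.2; simp only [hDdef, Finset.mem_filter, Finset.mem_univ, true_and] at this; exact this
      have hdr : (r.1).2.2 ^ q = (r.1).2.2 := by
        have := hrmem2.2; simp only [hDdef, Finset.mem_filter, Finset.mem_univ, true_and] at this; exact this
      have hvmem : ¬∃ cc : F, cc ^ q = cc ∧ (p.1).2.1 = cc * lam ^ m := by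
        have := hpmem2.1; simp only [hVdef, Finset.mem_filter, Finset.mem_univ, true_and] at this; exact this
      have hA : ((p.1).1 - (r.1).1) ^ q = (p.1).1 - (r.1).1 := by
        rw [← hφ, map_sub]
        simp only [hφ]
        rw [hγp, hγr]
      have hB : ((p.1).2.2 - (r.1).2.2) ^ q = (p.1).2.2 - (r.1).2.2 := by
        rw [← hφ, map_sub]
        simp only [hφ]
        rw [hdp, hdr]
      obtain ⟨e1, e2⟩ := hindep _ hvmem _ _ hA hB (by linear_combination hw2)
      have f1 : (p.1).1 = (r.1).1 := by linear_combination e1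
      have f2 : (p.1).2.2 = (r.1).2.2 := by linear_combination e2
      apply Subtype.ext
      exact Prod.ext f1 (Prod.ext hveq f2)
    have hTcard : T.card = k * ((q ^ 2 - q) * q) := by
      rw [hTdef, Finset.card_image_of_injOn hinjT, Finset.card_attach,
        Finset.card_product, Finset.card_product, hk, hVcard, hDcard]
    have hsub : (T : Set (F → F)) ⊆ S := by
      intro L hL
      rw [hTdef] at hL
      simp only [Finset.coe_image, Set.mem_image, Finset.mem_coe] at hL
      obtain ⟨p, _, rfl⟩ := hL
      exact hLfS p.1 p.2
    have hle : T.card ≤ S.ncard := by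
      have h := Set.ncard_le_ncard hsub (Set.toFinite S)
      rwa [Set.ncard_coe_finset] at h
    have harith : k * q ^ 2 * (q - 1) = k * ((q ^ 2 - q) * q) := by
      have h1 : q ^ 2 * (q - 1) = (q ^ 2 - q) * q := by
        rw [Nat.mul_sub, Nat.sub_mul]
        ring_nf
      rw [mul_assoc, h1]
    rw [harith]
    rw [← hTcard]
    exact hle
end

section
/- Let q be a prime power and let g(x) = x^m + Σ_{i=2}^{m-1} a_i x^i with all a_i ∈ F_q and m ≥ 2 be such that x ↦ g(x) is a bijection of F_q. Then the number of rank 1 linearized polynomials L of F_{q^2} such that f(x) = g(x^q + x) + L(x) is a bijection of F_{q^2} is exactly q^2(q-1); these L are precisely the rank 1 linearized polynomials whose kernel differs from the kernel of x^q + x and whose image differs from F_q. -/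
set_option linter.unusedSectionVars false
set_option linter.unusedVariables false
namespace Stmt17
open Polynomial

variable {q : ℕ} {F : Type} [Field F] [Fintype F]

lemma frob_hom (hq : IsPrimePow q) (hF : Fintype.card F = q ^ 2) :
    ∃ φ : F →+* F, ∀ x : F, φ x = x ^ q := by
  obtain ⟨r, k, hr, hk, rfl⟩ := hq
  have hr' : r.Prime := hr.nat_prime
  set p := ringChar F with hp
  have hpprime : p.Prime := CharP.char_is_prime F p
  haveI : Fact p.Prime := ⟨hpprime⟩
  obtain ⟨n, hn⟩ := FiniteField.card F p
  have hrp : r = p := by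
    have h1 : r ∣ p ^ (n : ℕ) := by
      rw [← hn.2, hF]
      exact dvd_pow (dvd_pow_self r hk.ne') (by positivity)
    exact (Nat.prime_dvd_prime_iff_eq hr' hpprime).mp (hr'.dvd_of_dvd_pow h1)
  subst hrp
  exact ⟨iterateFrobenius F p k, fun x => iterateFrobenius_def p k x⟩

lemma pow_qq (hF : Fintype.card F = q ^ 2) (x : F) : (x ^ q) ^ q = x := by
  rw [← pow_mul, ← sq, ← hF, FiniteField.pow_card]

lemma root_bound (hq2 : 2 ≤ q) (c d : F) (hc : c ≠ 0) :
    {x : F | c * x ^ q + d * x = 0}.ncard ≤ q := by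
  classical
  set P : F[X] := C c * X ^ q + C d * X with hP
  have hPq : P.coeff q = c := by
    rw [hP, coeff_add]
    rw [coeff_C_mul, coeff_X_pow, if_pos rfl, mul_one]
    have : (C d * X).natDegree < q := by
      calc (C d * X).natDegree ≤ 1 := by
            simpa using natDegree_C_mul_le d X
        _ < q := by omega
    rw [coeff_eq_zero_of_natDegree_lt this, add_zero]
  have hPne : P ≠ 0 := fun h => hc (by rw [← hPq, h, coeff_zero])
  have hdeg : P.natDegree ≤ q := by
    apply natDegree_add_le_of_degree_le
    · exact (natDegree_C_mul_le c (X ^ q)).trans (by simp)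
    · calc (C d * X).natDegree ≤ 1 := by simpa using natDegree_C_mul_le d X
        _ ≤ q := by omega
  have hsub : {x : F | c * x ^ q + d * x = 0} ⊆ ↑P.roots.toFinset := by
    intro x hx
    simp only [Set.mem_setOf_eq] at hx
    simp only [Finset.coe_sort_coe, Multiset.mem_toFinset, Finset.mem_coe, mem_roots hPne]
    simp [IsRoot, hP, hx]
  calc {x : F | c * x ^ q + d * x = 0}.ncard ≤ (↑P.roots.toFinset : Set F).ncard :=
        Set.ncard_le_ncard hsub (Set.finite_coe_iff.mp (by infer_instance))
    _ = P.roots.toFinset.card := Set.ncard_coe_finset _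
    _ ≤ Multiset.card P.roots := Multiset.toFinset_card_le _
    _ ≤ P.natDegree := card_roots' P
    _ ≤ q := hdeg

lemma ker_mul_range (L : F →+ F) :
    {x : F | L x = 0}.ncard * (Set.range L).ncard = Fintype.card F := by
  have h1 := AddSubgroup.card_eq_card_quotient_mul_card_addSubgroup L.ker
  have h2 : Nat.card (F ⧸ L.ker) = Nat.card L.range :=
    Nat.card_congr (QuotientAddGroup.quotientKerEquivRange L).toEquiv
  have h3 : Nat.card L.range = (Set.range L).ncard := by
    rw [← Nat.card_coe_set_eq]; rfl
  have h4 : Nat.card L.ker = {x : F | L x = 0}.ncard := by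
    rw [← Nat.card_coe_set_eq]
    exact Nat.card_congr (Equiv.setCongr (by ext x; simp [AddMonoidHom.mem_ker]))
  rw [h2, h3, h4, Nat.card_eq_fintype_card] at h1
  rw [h1, mul_comm]

/-- The bundled additive map `x ↦ α x^q + β x`. -/
def lmap (φ : F →+* F) (hφ : ∀ x : F, φ x = x ^ q) (α β : F) : F →+ F :=
  AddMonoidHom.mk' (fun x => α * x ^ q + β * x) (by
    intro x y
    have := map_add φ x y
    rw [hφ, hφ, hφ] at this
    show α * (x + y) ^ q + β * (x + y) = (α * x ^ q + β * x) + (α * y ^ q + β * y)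
    rw [this]; ring)

lemma lmap_apply (φ : F →+* F) (hφ : ∀ x : F, φ x = x ^ q) (α β x : F) :
    lmap φ hφ α β x = α * x ^ q + β * x := rfl

lemma rank1_cards (hq2 : 2 ≤ q) (hF : Fintype.card F = q ^ 2)
    (φ : F →+* F) (hφ : ∀ x : F, φ x = x ^ q)
    {α β : F} (hα : α ≠ 0) (hβ : β ≠ 0) (hrank : α ^ (q + 1) = β ^ (q + 1)) :
    {x : F | α * x ^ q + β * x = 0}.ncard = q ∧
      (Set.range fun x : F => α * x ^ q + β * x).ncard = q := by
  have hker_le : {x : F | α * x ^ q + β * x = 0}.ncard ≤ q := root_bound hq2 α β hα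
  have hrange_sub : (Set.range fun x : F => α * x ^ q + β * x) ⊆
      {y : F | α * y ^ q + (-(β ^ q)) * y = 0} := by
    rintro y ⟨x, rfl⟩
    have e1 : (α * x ^ q + β * x) ^ q = α ^ q * x + β ^ q * x ^ q := by
      have h := map_add φ (α * x ^ q) (β * x)
      rw [hφ, hφ, hφ] at h
      rw [h, mul_pow, mul_pow, pow_qq hF]
    show α * (α * x ^ q + β * x) ^ q + (-(β ^ q)) * (α * x ^ q + β * x) = 0
    rw [e1]
    calc α * (α ^ q * x + β ^ q * x ^ q) + (-(β ^ q)) * (α * x ^ q + β * x)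
        = (α ^ (q + 1) - β ^ (q + 1)) * x := by ring
      _ = 0 := by rw [hrank]; ring
  have hrange_le : (Set.range fun x : F => α * x ^ q + β * x).ncard ≤ q :=
    le_trans (Set.ncard_le_ncard hrange_sub (Set.toFinite _))
      (root_bound hq2 α (-(β ^ q)) hα)
  have hmul : {x : F | α * x ^ q + β * x = 0}.ncard *
      (Set.range fun x : F => α * x ^ q + β * x).ncard = q ^ 2 := by
    have := ker_mul_range (lmap φ hφ α β)
    rw [hF] at this
    exact this
  constructor
  · by_contra h
    have h1 : {x : F | α * x ^ q + β * x = 0}.ncard < q := lt_of_le_of_ne hker_le h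
    have : {x : F | α * x ^ q + β * x = 0}.ncard *
        (Set.range fun x : F => α * x ^ q + β * x).ncard < q * q := by
      calc _ ≤ {x : F | α * x ^ q + β * x = 0}.ncard * q :=
            Nat.mul_le_mul_left _ hrange_le
        _ < q * q := (Nat.mul_lt_mul_right (by omega)).mpr h1
    rw [hmul, sq] at this; omega
  · by_contra h
    have h1 : (Set.range fun x : F => α * x ^ q + β * x).ncard < q := lt_of_le_of_ne hrange_le h
    have : {x : F | α * x ^ q + β * x = 0}.ncard *
        (Set.range fun x : F => α * x ^ q + β * x).ncard < q * q := by
      calc _ ≤ q * (Set.range fun x : F => α * x ^ q + β * x).ncard :=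
            Nat.mul_le_mul_right _ hker_le
        _ < q * q := (Nat.mul_lt_mul_left (by omega)).mpr h1
    rw [hmul, sq] at this; omega

lemma trace_cards (hq2 : 2 ≤ q) (hF : Fintype.card F = q ^ 2)
    (φ : F →+* F) (hφ : ∀ x : F, φ x = x ^ q) :
    {x : F | x ^ q + x = 0}.ncard = q ∧ {x : F | x ^ q = x}.ncard = q ∧
      (Set.range fun x : F => x ^ q + x) = {x : F | x ^ q = x} := by
  have h1 := rank1_cards hq2 hF φ hφ (α := 1) (β := 1) one_ne_zero one_ne_zero rfl
  have e1 : {x : F | (1:F) * x ^ q + 1 * x = 0} = {x : F | x ^ q + x = 0} := by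
    ext x; simp
  have e2 : (Set.range fun x : F => (1:F) * x ^ q + 1 * x) =
      (Set.range fun x : F => x ^ q + x) := by
    simp only [one_mul]
  rw [e1, e2] at h1
  have hsubFq : (Set.range fun x : F => x ^ q + x) ⊆ {x : F | x ^ q = x} := by
    rintro y ⟨x, rfl⟩
    show (x ^ q + x) ^ q = x ^ q + x
    have h := map_add φ (x ^ q) x
    simp only [hφ] at h
    rw [h, pow_qq hF, add_comm]
  have hFq_le : {x : F | x ^ q = x}.ncard ≤ q := by
    have e3 : {x : F | x ^ q = x} = {x : F | (1:F) * x ^ q + (-1) * x = 0} := by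
      ext x
      rw [Set.mem_setOf_eq, Set.mem_setOf_eq, one_mul, neg_one_mul, add_neg_eq_zero]
    rw [e3]
    exact root_bound hq2 1 (-1) one_ne_zero
  have heq : (Set.range fun x : F => x ^ q + x) = {x : F | x ^ q = x} :=
    Set.eq_of_subset_of_ncard_le hsubFq (by rw [h1.2]; exact hFq_le) (Set.toFinite _)
  refine ⟨h1.1, ?_, heq⟩
  rw [← heq, h1.2]

lemma exists_nonroot (hq2 : 2 ≤ q) (hF : Fintype.card F = q ^ 2)
    (c d : F) (hd : d ≠ 0) : ∃ x : F, c * x ^ q + d * x ≠ 0 := by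
  by_cases hc : c = 0
  · exact ⟨1, by simp [hc, hd]⟩
  · by_contra h
    push_neg at h
    have huniv : {x : F | c * x ^ q + d * x = 0} = Set.univ := by
      ext x; simp [h x]
    have h2 := root_bound hq2 c d hc
    rw [huniv, Set.ncard_univ, Nat.card_eq_fintype_card, hF, sq] at h2
    have h3 : q * q ≤ q * 1 := by simpa using h2
    have := Nat.le_of_mul_le_mul_left h3 (show 0 < q by omega)
    omega

lemma ker_trivial_inter (hq2 : 2 ≤ q) (hF : Fintype.card F = q ^ 2)
    (φ : F →+* F) (hφ : ∀ x : F, φ x = x ^ q)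
    {α β : F} (hα : α ≠ 0) (hβ : β ≠ 0) (hrank : α ^ (q + 1) = β ^ (q + 1))
    (hne : {x : F | α * x ^ q + β * x = 0} ≠ {x : F | x ^ q + x = 0}) :
    ∀ v : F, α * v ^ q + β * v = 0 → v ^ q + v = 0 → v = 0 := by
  intro v hv1 hv2
  by_contra hv
  obtain ⟨hkT, hFqc, -⟩ := trace_cards hq2 hF φ hφ
  set S := (fun c : F => c * v) '' {x : F | x ^ q = x} with hS
  have hScard : S.ncard = q := by
    rw [hS, Set.ncard_image_of_injective _ (mul_left_injective₀ hv), hFqc]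
  have hSker : S ⊆ {x : F | α * x ^ q + β * x = 0} := by
    rintro _ ⟨c, hc, rfl⟩
    have hc' : c ^ q = c := hc
    show α * (c * v) ^ q + β * (c * v) = 0
    rw [mul_pow, hc']
    calc α * (c * v ^ q) + β * (c * v) = c * (α * v ^ q + β * v) := by ring
      _ = 0 := by rw [hv1, mul_zero]
  have hSkerT : S ⊆ {x : F | x ^ q + x = 0} := by
    rintro _ ⟨c, hc, rfl⟩
    have hc' : c ^ q = c := hc
    show (c * v) ^ q + c * v = 0
    rw [mul_pow, hc']
    calc c * v ^ q + c * v = c * (v ^ q + v) := by ring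
      _ = 0 := by rw [hv2, mul_zero]
  have h1 : S = {x : F | α * x ^ q + β * x = 0} :=
    Set.eq_of_subset_of_ncard_le hSker
      (by rw [hScard, (rank1_cards hq2 hF φ hφ hα hβ hrank).1]) (Set.toFinite _)
  have h2 : S = {x : F | x ^ q + x = 0} :=
    Set.eq_of_subset_of_ncard_le hSkerT (by rw [hScard, hkT]) (Set.toFinite _)
  exact hne (h1 ▸ h2)

lemma range_trivial_inter (hq2 : 2 ≤ q) (hF : Fintype.card F = q ^ 2)
    (φ : F →+* F) (hφ : ∀ x : F, φ x = x ^ q)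
    {α β : F} (hα : α ≠ 0) (hβ : β ≠ 0) (hrank : α ^ (q + 1) = β ^ (q + 1))
    (hne : (Set.range fun x : F => α * x ^ q + β * x) ≠ {x : F | x ^ q = x}) :
    ∀ w : F, w ∈ (Set.range fun x : F => α * x ^ q + β * x) → w ^ q = w → w = 0 := by
  rintro w ⟨x0, rfl⟩ hwq
  set w := α * x0 ^ q + β * x0 with hw
  by_contra hwne
  obtain ⟨-, hFqc, -⟩ := trace_cards hq2 hF φ hφ
  set S := (fun c : F => c * w) '' {x : F | x ^ q = x} with hS
  have hScard : S.ncard = q := by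
    rw [hS, Set.ncard_image_of_injective _ (mul_left_injective₀ hwne), hFqc]
  have hSFq : S ⊆ {x : F | x ^ q = x} := by
    rintro _ ⟨c, hc, rfl⟩
    have hc' : c ^ q = c := hc
    show (c * w) ^ q = c * w
    rw [mul_pow, hc', hwq]
  have hSrange : S ⊆ Set.range fun x : F => α * x ^ q + β * x := by
    rintro _ ⟨c, hc, rfl⟩
    have hc' : c ^ q = c := hc
    refine ⟨c * x0, ?_⟩
    show α * (c * x0) ^ q + β * (c * x0) = c * w
    rw [mul_pow, hc', hw]; ring
  have h1 : S = {x : F | x ^ q = x} :=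
    Set.eq_of_subset_of_ncard_le hSFq (by rw [hScard, hFqc]) (Set.toFinite _)
  have h2 : S = Set.range fun x : F => α * x ^ q + β * x :=
    Set.eq_of_subset_of_ncard_le hSrange
      (by rw [hScard, (rank1_cards hq2 hF φ hφ hα hβ hrank).2]) (Set.toFinite _)
  exact hne (h2 ▸ h1)

lemma exists_ker_trace (hq2 : 2 ≤ q) (hF : Fintype.card F = q ^ 2)
    (φ : F →+* F) (hφ : ∀ x : F, φ x = x ^ q) :
    ∃ v : F, v ^ q + v = 0 ∧ v ≠ 0 := by
  obtain ⟨hkT, -, -⟩ := trace_cards hq2 hF φ hφ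
  by_contra h
  push_neg at h
  have hsub : {x : F | x ^ q + x = 0} ⊆ {(0 : F)} := by
    intro x hx
    simp only [Set.mem_singleton_iff]
    by_contra hxne
    exact hxne (h x hx)
  have := Set.ncard_le_ncard hsub (Set.finite_singleton _)
  rw [hkT, Set.ncard_singleton] at this
  omega

lemma ker_eq_iff (hq2 : 2 ≤ q) (hF : Fintype.card F = q ^ 2)
    (φ : F →+* F) (hφ : ∀ x : F, φ x = x ^ q)
    {α β : F} (hα : α ≠ 0) :
    {x : F | α * x ^ q + β * x = 0} = {x : F | x ^ q + x = 0} ↔ α = β := by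
  constructor
  · intro heq
    by_contra hne
    obtain ⟨v, hv, hvne⟩ := exists_ker_trace hq2 hF φ hφ
    have hvq : v ^ q = -v := eq_neg_of_add_eq_zero_left hv
    have hvmem : v ∈ {x : F | α * x ^ q + β * x = 0} := by rw [heq]; exact hv
    have : α * v ^ q + β * v = (β - α) * v := by rw [hvq]; ring
    rw [Set.mem_setOf_eq, this] at hvmem
    rcases mul_eq_zero.mp hvmem with h | h
    · exact hne (by linear_combination -h)
    · exact hvne h
  · rintro rfl
    ext x
    simp only [Set.mem_setOf_eq, ← mul_add]
    rw [mul_eq_zero]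
    simp [hα]

lemma range_eq_iff (hq2 : 2 ≤ q) (hF : Fintype.card F = q ^ 2)
    (φ : F →+* F) (hφ : ∀ x : F, φ x = x ^ q)
    {α β : F} (hα : α ≠ 0) (hβ : β ≠ 0) (hrank : α ^ (q + 1) = β ^ (q + 1)) :
    (Set.range fun x : F => α * x ^ q + β * x) = {x : F | x ^ q = x} ↔ β = α ^ q := by
  have hpowq : ∀ x : F, (α * x ^ q + β * x) ^ q = α ^ q * x + β ^ q * x ^ q := by
    intro x
    have h := map_add φ (α * x ^ q) (β * x)
    simp only [hφ] at h
    rw [h, mul_pow, mul_pow, pow_qq hF]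
  constructor
  · intro heq
    by_contra hne
    have hd : α ^ q - β ≠ 0 := sub_ne_zero.mpr fun h => hne h.symm
    obtain ⟨x, hx⟩ := exists_nonroot hq2 hF (β ^ q - α) (α ^ q - β) hd
    have hmem : α * x ^ q + β * x ∈ {y : F | y ^ q = y} := by
      rw [← heq]; exact ⟨x, rfl⟩
    rw [Set.mem_setOf_eq, hpowq] at hmem
    apply hx
    linear_combination hmem
  · rintro rfl
    obtain ⟨-, hFqc, -⟩ := trace_cards hq2 hF φ hφ
    have hsub : (Set.range fun x : F => α * x ^ q + α ^ q * x) ⊆ {x : F | x ^ q = x} := by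
      rintro _ ⟨x, rfl⟩
      show (α * x ^ q + α ^ q * x) ^ q = α * x ^ q + α ^ q * x
      rw [hpowq, pow_qq hF, add_comm]
    exact Set.eq_of_subset_of_ncard_le hsub
      (by rw [hFqc, (rank1_cards hq2 hF φ hφ hα hβ hrank).2]) (Set.toFinite _)

lemma trace_mem_Fq (hF : Fintype.card F = q ^ 2)
    (φ : F →+* F) (hφ : ∀ x : F, φ x = x ^ q) (x : F) :
    (x ^ q + x) ^ q = x ^ q + x := by
  have h := map_add φ (x ^ q) x
  simp only [hφ] at h
  rw [h, pow_qq hF, add_comm]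

lemma g_mem_Fq (hF : Fintype.card F = q ^ 2)
    (φ : F →+* F) (hφ : ∀ x : F, φ x = x ^ q)
    (m : ℕ) (a : ℕ → F) (ha : ∀ i, (a i) ^ q = a i)
    (t : F) (ht : t ^ q = t) :
    (t ^ m + ∑ i ∈ Finset.Ico 2 m, a i * t ^ i) ^ q
      = t ^ m + ∑ i ∈ Finset.Ico 2 m, a i * t ^ i := by
  conv_lhs => rw [← hφ]
  rw [map_add, map_pow, map_sum]
  simp only [map_mul, map_pow]
  simp only [hφ, ht, ha]

lemma main_iff (hq2 : 2 ≤ q) (hF : Fintype.card F = q ^ 2)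
    (φ : F →+* F) (hφ : ∀ x : F, φ x = x ^ q)
    (m : ℕ) (hm : 2 ≤ m) (a : ℕ → F) (ha : ∀ i, (a i) ^ q = a i)
    (hperm : Set.BijOn
      (fun x : F => x ^ m + ∑ i ∈ Finset.Ico 2 m, a i * x ^ i)
      {x : F | x ^ q = x} {x : F | x ^ q = x})
    {α β : F} (hα : α ≠ 0) (hβ : β ≠ 0) (hrank : α ^ (q + 1) = β ^ (q + 1)) :
    Function.Bijective (fun x : F =>
        (x ^ q + x) ^ m + (∑ i ∈ Finset.Ico 2 m, a i * (x ^ q + x) ^ i)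
          + (α * x ^ q + β * x))
      ↔ ({x : F | α * x ^ q + β * x = 0} ≠ {x : F | x ^ q + x = 0} ∧
          (Set.range fun x : F => α * x ^ q + β * x) ≠ {x : F | x ^ q = x}) := by
  set f : F → F := fun x =>
    (x ^ q + x) ^ m + (∑ i ∈ Finset.Ico 2 m, a i * (x ^ q + x) ^ i)
      + (α * x ^ q + β * x) with hf
  have hsum0 : (∑ i ∈ Finset.Ico 2 m, a i * (0:F) ^ i) = 0 := by
    apply Finset.sum_eq_zero
    intro i hi
    have : 2 ≤ i := (Finset.mem_Ico.mp hi).1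
    rw [zero_pow (by omega), mul_zero]
  constructor
  · intro hbij
    constructor
    · intro hkeq
      obtain ⟨v, hv, hvne⟩ := exists_ker_trace hq2 hF φ hφ
      have hvL : α * v ^ q + β * v = 0 := by
        have : v ∈ {x : F | α * x ^ q + β * x = 0} := by rw [hkeq]; exact hv
        exact this
      have hfv : f v = 0 := by
        rw [hf]
        simp only [hv, hvL]
        rw [zero_pow (by omega : m ≠ 0), hsum0]
        ring
      have hf0 : f 0 = 0 := by
        rw [hf]
        simp only [zero_pow (by omega : q ≠ 0), add_zero, mul_zero, zero_add]
        rw [zero_pow (by omega : m ≠ 0), hsum0]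
        ring
      exact hvne (hbij.injective (hfv.trans hf0.symm))
    · intro hreq
      have hfmem : ∀ x : F, (f x) ^ q = f x := by
        intro x
        have h1 := g_mem_Fq hF φ hφ m a ha (x ^ q + x) (trace_mem_Fq hF φ hφ x)
        have h2 : (α * x ^ q + β * x) ^ q = α * x ^ q + β * x := by
          have : (α * x ^ q + β * x) ∈ {y : F | y ^ q = y} := by
            rw [← hreq]; exact ⟨x, rfl⟩
          exact this
        rw [hf]
        have h3 := map_add φ ((x ^ q + x) ^ m + ∑ i ∈ Finset.Ico 2 m, a i * (x ^ q + x) ^ i)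
          (α * x ^ q + β * x)
        simp only [hφ] at h3
        rw [h3, h1, h2]
      have hnotall : ∃ y : F, y ^ q ≠ y := by
        by_contra h
        push_neg at h
        obtain ⟨-, hFqc, -⟩ := trace_cards hq2 hF φ hφ
        have : {x : F | x ^ q = x} = Set.univ := by ext x; simp [h x]
        rw [this, Set.ncard_univ, Nat.card_eq_fintype_card, hF, sq] at hFqc
        have : q * 1 = q * q := by simpa using hFqc.symm
        have := Nat.eq_of_mul_eq_mul_left (show 0 < q by omega) this
        omega
      obtain ⟨y, hy⟩ := hnotall
      obtain ⟨x, hx⟩ := hbij.surjective y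
      exact hy (by rw [← hx, hfmem])
  · rintro ⟨hker_ne, hrange_ne⟩
    rw [Fintype.bijective_iff_injective_and_card]
    refine ⟨?_, rfl⟩
    intro x y hxy
    set g : F → F := fun t => t ^ m + ∑ i ∈ Finset.Ico 2 m, a i * t ^ i with hg
    have hsubq : (y - x) ^ q = y ^ q - x ^ q := by
      have := map_sub φ y x
      simp only [hφ] at this
      exact this
    have key : g (x ^ q + x) - g (y ^ q + y) = α * (y - x) ^ q + β * (y - x) := by
      rw [hsubq, hg]
      simp only [hf] at hxy
      linear_combination hxy
    have hvalFq : (α * (y - x) ^ q + β * (y - x)) ^ q = α * (y - x) ^ q + β * (y - x) := by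
      rw [← key]
      have h1 := g_mem_Fq hF φ hφ m a ha (x ^ q + x) (trace_mem_Fq hF φ hφ x)
      have h2 := g_mem_Fq hF φ hφ m a ha (y ^ q + y) (trace_mem_Fq hF φ hφ y)
      have h3 := map_sub φ (g (x ^ q + x)) (g (y ^ q + y))
      simp only [hφ] at h3
      rw [h3, hg]
      simp only []
      rw [h1, h2]
    have hval0 : α * (y - x) ^ q + β * (y - x) = 0 :=
      range_trivial_inter hq2 hF φ hφ hα hβ hrank hrange_ne _ ⟨y - x, rfl⟩ hvalFq
    have hgeq : g (x ^ q + x) = g (y ^ q + y) := by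
      have := key
      rw [hval0] at this
      exact sub_eq_zero.mp this
    have ht : x ^ q + x = y ^ q + y := by
      apply hperm.injOn (trace_mem_Fq hF φ hφ x) (trace_mem_Fq hF φ hφ y)
      exact hgeq
    have htr0 : (y - x) ^ q + (y - x) = 0 := by
      rw [hsubq]
      linear_combination -ht
    have := ker_trivial_inter hq2 hF φ hφ hα hβ hrank hker_ne (y - x) hval0 htr0
    exact (sub_eq_zero.mp this).symm

lemma ncard_setOf_eq_filter (p : F → Prop) [DecidablePred p] :
    {x : F | p x}.ncard = (Finset.univ.filter p).card := by
  rw [← Set.ncard_coe_finset]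
  congr 1
  ext x
  simp

lemma mu_card (hq2 : 2 ≤ q) (hF : Fintype.card F = q ^ 2) :
    {x : F | x ^ (q + 1) = 1}.ncard = q + 1 := by
  classical
  obtain ⟨j, rfl⟩ : ∃ j, q = j + 2 := ⟨q - 2, by omega⟩
  set q := j + 2
  have hq1 : q ^ 2 - 1 = (q + 1) * (q - 1) := by
    apply Nat.sub_eq_of_eq_add
    show (j + 2) ^ 2 = (j + 3) * (j + 1) + 1
    ring
  obtain ⟨g, hg⟩ := IsCyclic.exists_ofOrder_eq_natCard (α := Fˣ)
  have hcardu : Nat.card Fˣ = q ^ 2 - 1 := by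
    rw [Nat.card_eq_fintype_card, Fintype.card_units, hF]
  rw [hcardu] at hg
  have hdvd : (q - 1) ∣ (q ^ 2 - 1) := ⟨q + 1, by rw [hq1, mul_comm]⟩
  have horder : orderOf (g ^ (q - 1)) = q + 1 := by
    rw [orderOf_pow, hg, Nat.gcd_eq_right hdvd, hq1, Nat.mul_div_cancel _ (by omega : 0 < q - 1)]
  have hprim : IsPrimitiveRoot ((g ^ (q - 1) : Fˣ) : F) (q + 1) :=
    IsPrimitiveRoot.coe_units_iff.mpr (horder ▸ IsPrimitiveRoot.orderOf (g ^ (q - 1)))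
  have hset : {x : F | x ^ (q + 1) = 1} = ↑(Polynomial.nthRootsFinset (q + 1) (1 : F)) := by
    ext x
    rw [Set.mem_setOf_eq, Finset.mem_coe, Polynomial.mem_nthRootsFinset (by omega) (1 : F)]
  rw [hset, Set.ncard_coe_finset, hprim.card_nthRootsFinset]

lemma lmap_injective (hq2 : 2 ≤ q) (hF : Fintype.card F = q ^ 2) :
    Function.Injective (fun p : F × F => fun x : F => p.1 * x ^ q + p.2 * x) := by
  rintro ⟨α, β⟩ ⟨α', β'⟩ h
  simp only [funext_iff] at h
  have hzero : ∀ x : F, (α - α') * x ^ q + (β - β') * x = 0 := by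
    intro x
    have := h x
    linear_combination this
  have hαα : α = α' := by
    by_contra hne
    have hsub : {x : F | (α - α') * x ^ q + (β - β') * x = 0} = Set.univ := by
      ext x; simp [hzero x]
    have h2 := root_bound hq2 (α - α') (β - β') (sub_ne_zero.mpr hne)
    rw [hsub, Set.ncard_univ, Nat.card_eq_fintype_card, hF, sq] at h2
    have h3 : q * q ≤ q * 1 := by simpa using h2
    have := Nat.le_of_mul_le_mul_left h3 (show 0 < q by omega)
    omega
  have hββ : β = β' := by
    have := hzero 1
    rw [hαα] at this
    simp only [one_pow, mul_one, sub_self, zero_mul, zero_add] at this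
    exact sub_eq_zero.mp this
  rw [hαα, hββ]

lemma count_pairs (hq2 : 2 ≤ q) (hF : Fintype.card F = q ^ 2)
    (φ : F →+* F) (hφ : ∀ x : F, φ x = x ^ q) :
    {p : F × F | p.1 ≠ 0 ∧ p.1 ^ (q + 1) = p.2 ^ (q + 1) ∧ p.2 ≠ p.1 ∧ p.2 ≠ p.1 ^ q}.ncard
      = q ^ 2 * (q - 1) := by
  classical
  -- the inner count for α ≠ 0
  have hBcard : ∀ α : F, α ≠ 0 →
      (Finset.univ.filter fun β : F => α ^ (q + 1) = β ^ (q + 1)).card = q + 1 := by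
    intro α hα
    have himg : (Finset.univ.filter fun β : F => α ^ (q + 1) = β ^ (q + 1))
        = (Finset.univ.filter fun z : F => z ^ (q + 1) = 1).image (fun z => α * z) := by
      ext β
      simp only [Finset.mem_filter, Finset.mem_univ, true_and, Finset.mem_image]
      constructor
      · intro hb
        refine ⟨β / α, ⟨?_, by field_simp⟩⟩
        rw [div_pow, ← hb, div_self (pow_ne_zero _ hα)]
      · rintro ⟨z, hz, rfl⟩
        rw [mul_pow, hz, mul_one]
    rw [himg, Finset.card_image_of_injective _ (mul_right_injective₀ hα)]
    have := mu_card (F := F) hq2 hF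
    rw [ncard_setOf_eq_filter] at this
    exact this
  -- α^(q+1) is in F_q
  have hnormq : ∀ α : F, (α ^ (q + 1)) ^ q = α ^ (q + 1) := by
    intro α
    calc (α ^ (q + 1)) ^ q = (α ^ q) ^ q * α ^ q := by
          rw [← pow_mul, ← pow_mul, ← pow_add]; congr 1; ring
      _ = α * α ^ q := by rw [pow_qq hF]
      _ = α ^ (q + 1) := by rw [pow_succ]; ring
  -- inner filtered count
  have hinner : ∀ α : F,
      (Finset.univ.filter fun β : F =>
        α ≠ 0 ∧ α ^ (q + 1) = β ^ (q + 1) ∧ β ≠ α ∧ β ≠ α ^ q).card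
      = if α = 0 then 0 else if α ^ q = α then q else q - 1 := by
    intro α
    by_cases hα : α = 0
    · simp [hα]
    · rw [if_neg hα]
      have hmemα : α ∈ Finset.univ.filter fun β : F => α ^ (q + 1) = β ^ (q + 1) := by
        simp
      by_cases hfix : α ^ q = α
      · rw [if_pos hfix]
        have : (Finset.univ.filter fun β : F =>
            α ≠ 0 ∧ α ^ (q + 1) = β ^ (q + 1) ∧ β ≠ α ∧ β ≠ α ^ q)
            = (Finset.univ.filter fun β : F => α ^ (q + 1) = β ^ (q + 1)).erase α := by
          ext β
          simp only [Finset.mem_filter, Finset.mem_univ, true_and, Finset.mem_erase, hfix]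
          tauto
        rw [this, Finset.card_erase_of_mem hmemα, hBcard α hα]
        omega
      · rw [if_neg hfix]
        have hmemαq : α ^ q ∈ (Finset.univ.filter fun β : F =>
            α ^ (q + 1) = β ^ (q + 1)).erase α := by
          simp only [Finset.mem_erase, Finset.mem_filter, Finset.mem_univ, true_and]
          refine ⟨hfix, ?_⟩
          rw [← pow_mul, mul_comm q (q+1), pow_mul, hnormq]
        have : (Finset.univ.filter fun β : F =>
            α ≠ 0 ∧ α ^ (q + 1) = β ^ (q + 1) ∧ β ≠ α ∧ β ≠ α ^ q)
            = ((Finset.univ.filter fun β : F => α ^ (q + 1) = β ^ (q + 1)).erase α).erase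
                (α ^ q) := by
          ext β
          simp only [Finset.mem_filter, Finset.mem_univ, true_and, Finset.mem_erase]
          tauto
        rw [this, Finset.card_erase_of_mem hmemαq, Finset.card_erase_of_mem hmemα, hBcard α hα]
        omega
  -- express the pair set as a Finset and count via biUnion over the first coordinate
  have hset : {p : F × F | p.1 ≠ 0 ∧ p.1 ^ (q + 1) = p.2 ^ (q + 1) ∧ p.2 ≠ p.1 ∧ p.2 ≠ p.1 ^ q}
      = ↑(Finset.univ.filter fun p : F × F =>
          p.1 ≠ 0 ∧ p.1 ^ (q + 1) = p.2 ^ (q + 1) ∧ p.2 ≠ p.1 ∧ p.2 ≠ p.1 ^ q) := by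
    ext p; simp
  rw [hset, Set.ncard_coe_finset]
  have hbiU : (Finset.univ.filter fun p : F × F =>
      p.1 ≠ 0 ∧ p.1 ^ (q + 1) = p.2 ^ (q + 1) ∧ p.2 ≠ p.1 ∧ p.2 ≠ p.1 ^ q)
      = Finset.univ.biUnion (fun α : F =>
          (Finset.univ.filter fun β : F =>
            α ≠ 0 ∧ α ^ (q + 1) = β ^ (q + 1) ∧ β ≠ α ∧ β ≠ α ^ q).image (fun β => (α, β))) := by
    ext ⟨a, b⟩
    simp only [Finset.mem_filter, Finset.mem_univ, true_and, Finset.mem_biUnion,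
      Finset.mem_image]
    constructor
    · rintro ⟨h1, h2, h3, h4⟩
      exact ⟨a, b, by simp [h1, h2, h3, h4], rfl⟩
    · rintro ⟨α, β, hβ, heq⟩
      obtain ⟨rfl, rfl⟩ : α = a ∧ β = b :=
        ⟨congrArg Prod.fst heq, congrArg Prod.snd heq⟩
      exact hβ
  rw [hbiU, Finset.card_biUnion (by
    intro x _ y _ hxy
    simp only [Finset.disjoint_left, Finset.mem_image]
    rintro p ⟨β, -, rfl⟩ ⟨β', -, h⟩
    exact hxy (congrArg Prod.fst h).symm)]
  have himgcard : ∀ α : F,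
      ((Finset.univ.filter fun β : F =>
          α ≠ 0 ∧ α ^ (q + 1) = β ^ (q + 1) ∧ β ≠ α ∧ β ≠ α ^ q).image (fun β => (α, β))).card
      = if α = 0 then 0 else if α ^ q = α then q else q - 1 := by
    intro α
    rw [Finset.card_image_of_injective _ (fun b b' hb => congrArg Prod.snd hb), hinner α]
  calc (∑ α : F, ((Finset.univ.filter fun β : F =>
          α ≠ 0 ∧ α ^ (q + 1) = β ^ (q + 1) ∧ β ≠ α ∧ β ≠ α ^ q).image (fun β => (α, β))).card)
      = ∑ α : F, if α = 0 then 0 else if α ^ q = α then q else q - 1 :=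
        Finset.sum_congr rfl (fun α _ => himgcard α)
    _ = q ^ 2 * (q - 1) := by
        rw [Finset.sum_ite]
        rw [Finset.sum_const_zero, zero_add, Finset.sum_ite, Finset.sum_const,
          Finset.sum_const, Finset.filter_filter, Finset.filter_filter]
        have hc1 : (Finset.univ.filter fun α : F => ¬α = 0 ∧ α ^ q = α).card = q - 1 := by
          have he : (Finset.univ.filter fun α : F => ¬α = 0 ∧ α ^ q = α)
              = (Finset.univ.filter fun α : F => α ^ q = α).erase 0 := by
            ext α
            simp only [Finset.mem_filter, Finset.mem_univ, true_and, Finset.mem_erase]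
          rw [he, Finset.card_erase_of_mem (by simp [zero_pow (show q ≠ 0 by omega)])]
          obtain ⟨-, hFqc, -⟩ := trace_cards hq2 hF φ hφ
          rw [ncard_setOf_eq_filter] at hFqc
          rw [hFqc]
        have hc2 : (Finset.univ.filter fun α : F => ¬α = 0 ∧ ¬α ^ q = α).card
            = q ^ 2 - 1 - (q - 1) := by
          have hsplit := Finset.card_filter_add_card_filter_not
            (s := Finset.univ.filter fun α : F => ¬α = 0) (p := fun α : F => α ^ q = α)
          rw [Finset.filter_filter, Finset.filter_filter] at hsplit
          have huniv : (Finset.univ.filter fun α : F => ¬α = 0).card = q ^ 2 - 1 := by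
            rw [show (Finset.univ.filter fun α : F => ¬α = 0)
                = Finset.univ.erase 0 by ext α; simp [Finset.mem_erase]]
            rw [Finset.card_erase_of_mem (Finset.mem_univ _), Finset.card_univ, hF]
          rw [huniv, hc1] at hsplit
          omega
        rw [hc1, hc2, smul_eq_mul, smul_eq_mul]
        have h1 : 1 ≤ q := by omega
        have h2 : 1 ≤ q ^ 2 := Nat.one_le_pow _ _ (by omega)
        have h3 : q - 1 ≤ q ^ 2 - 1 := by
          have : q ≤ q ^ 2 := by nlinarith
          omega
        zify [h1, h2, h3]
        ring

end Stmt17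

/-- Let `g(x) = x^m + Σ_{i=2}^{m-1} a_i x^i` with all `a_i ∈ F_q`,
`m ≥ 2`, be a bijection of `F_q`. Then the rank 1 linearized polynomials `L` of
`F_{q^2}` such that `f(x) = g(x^q + x) + L(x)` is a bijection of `F_{q^2}` are
precisely those whose kernel differs from the kernel of `x^q + x` and whose image
differs from `F_q`, and their number is exactly `q^2(q-1)`. -/
theorem stmt_17 (q : ℕ) (hq : IsPrimePow q)
    (F : Type) [Field F] [Fintype F] (hF : Fintype.card F = q ^ 2)
    (m : ℕ) (hm : 2 ≤ m)
    (a : ℕ → F) (ha : ∀ i, (a i) ^ q = a i)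
    (hperm : Set.BijOn
      (fun x : F => x ^ m + ∑ i ∈ Finset.Ico 2 m, a i * x ^ i)
      {x : F | x ^ q = x} {x : F | x ^ q = x}) :
    {L : F → F |
        (∃ α β : F, α ^ (q + 1) = β ^ (q + 1) ∧ (α, β) ≠ (0, 0) ∧
          L = fun x : F => α * x ^ q + β * x) ∧
        Function.Bijective (fun x : F =>
          (x ^ q + x) ^ m + (∑ i ∈ Finset.Ico 2 m, a i * (x ^ q + x) ^ i) + L x)}
      = {L : F → F |
          (∃ α β : F, α ^ (q + 1) = β ^ (q + 1) ∧ (α, β) ≠ (0, 0) ∧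
            L = fun x : F => α * x ^ q + β * x) ∧
          {x : F | L x = 0} ≠ {x : F | x ^ q + x = 0} ∧
          Set.range L ≠ {x : F | x ^ q = x}}
    ∧ Set.ncard {L : F → F |
        (∃ α β : F, α ^ (q + 1) = β ^ (q + 1) ∧ (α, β) ≠ (0, 0) ∧
          L = fun x : F => α * x ^ q + β * x) ∧
        Function.Bijective (fun x : F =>
          (x ^ q + x) ^ m + (∑ i ∈ Finset.Ico 2 m, a i * (x ^ q + x) ^ i) + L x)}
      = q ^ 2 * (q - 1) := by
  have hq2 : 2 ≤ q := hq.two_le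
  obtain ⟨φ, hφ⟩ := Stmt17.frob_hom hq hF
  have hnz : ∀ α β : F, α ^ (q + 1) = β ^ (q + 1) → (α, β) ≠ (0, 0) → α ≠ 0 ∧ β ≠ 0 := by
    intro α β hrank hne
    constructor
    · intro h
      apply hne
      have h0 : β ^ (q + 1) = 0 := by rw [← hrank, h, zero_pow (show q + 1 ≠ 0 by omega)]
      have hβ : β = 0 := (pow_eq_zero_iff (show q + 1 ≠ 0 by omega)).mp h0
      rw [h, hβ]
    · intro h
      apply hne
      have h0 : α ^ (q + 1) = 0 := by rw [hrank, h, zero_pow (show q + 1 ≠ 0 by omega)]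
      have hα : α = 0 := (pow_eq_zero_iff (show q + 1 ≠ 0 by omega)).mp h0
      rw [h, hα]
  have hsetEq : {L : F → F |
        (∃ α β : F, α ^ (q + 1) = β ^ (q + 1) ∧ (α, β) ≠ (0, 0) ∧
          L = fun x : F => α * x ^ q + β * x) ∧
        Function.Bijective (fun x : F =>
          (x ^ q + x) ^ m + (∑ i ∈ Finset.Ico 2 m, a i * (x ^ q + x) ^ i) + L x)}
      = {L : F → F |
          (∃ α β : F, α ^ (q + 1) = β ^ (q + 1) ∧ (α, β) ≠ (0, 0) ∧
            L = fun x : F => α * x ^ q + β * x) ∧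
          {x : F | L x = 0} ≠ {x : F | x ^ q + x = 0} ∧
          Set.range L ≠ {x : F | x ^ q = x}} := by
    ext L
    simp only [Set.mem_setOf_eq]
    constructor
    · rintro ⟨⟨α, β, hrank, hne, rfl⟩, hbij⟩
      obtain ⟨hα, hβ⟩ := hnz α β hrank hne
      have h := (Stmt17.main_iff hq2 hF φ hφ m hm a ha hperm hα hβ hrank).mp hbij
      exact ⟨⟨α, β, hrank, hne, rfl⟩, h.1, h.2⟩
    · rintro ⟨⟨α, β, hrank, hne, rfl⟩, h1, h2⟩
      obtain ⟨hα, hβ⟩ := hnz α β hrank hne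
      exact ⟨⟨α, β, hrank, hne, rfl⟩,
        (Stmt17.main_iff hq2 hF φ hφ m hm a ha hperm hα hβ hrank).mpr ⟨h1, h2⟩⟩
  refine ⟨hsetEq, ?_⟩
  rw [hsetEq]
  have himg : {L : F → F |
          (∃ α β : F, α ^ (q + 1) = β ^ (q + 1) ∧ (α, β) ≠ (0, 0) ∧
            L = fun x : F => α * x ^ q + β * x) ∧
          {x : F | L x = 0} ≠ {x : F | x ^ q + x = 0} ∧
          Set.range L ≠ {x : F | x ^ q = x}}
      = (fun p : F × F => fun x : F => p.1 * x ^ q + p.2 * x) ''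
        {p : F × F | p.1 ≠ 0 ∧ p.1 ^ (q + 1) = p.2 ^ (q + 1) ∧ p.2 ≠ p.1 ∧ p.2 ≠ p.1 ^ q} := by
    ext L
    simp only [Set.mem_setOf_eq, Set.mem_image, Prod.exists]
    constructor
    · rintro ⟨⟨α, β, hrank, hne, rfl⟩, h1, h2⟩
      obtain ⟨hα, hβ⟩ := hnz α β hrank hne
      refine ⟨α, β, ⟨hα, hrank, ?_, ?_⟩, rfl⟩
      · intro h
        exact h1 ((Stmt17.ker_eq_iff hq2 hF φ hφ hα).mpr h.symm)
      · intro h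
        exact h2 ((Stmt17.range_eq_iff hq2 hF φ hφ hα hβ hrank).mpr h)
    · rintro ⟨α, β, ⟨hα, hrank, hba, hbaq⟩, rfl⟩
      have hβ : β ≠ 0 := by
        intro h
        rw [h, zero_pow (show q + 1 ≠ 0 by omega)] at hrank
        exact hα ((pow_eq_zero_iff (show q + 1 ≠ 0 by omega)).mp hrank)
      refine ⟨⟨α, β, hrank, ?_, rfl⟩, ?_, ?_⟩
      · intro h
        exact hα (congrArg Prod.fst h)
      · intro h
        exact hba ((Stmt17.ker_eq_iff hq2 hF φ hφ hα).mp h).symm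
      · intro h
        exact hbaq ((Stmt17.range_eq_iff hq2 hF φ hφ hα hβ hrank).mp h)
  rw [himg, Set.ncard_image_of_injective _ (Stmt17.lmap_injective hq2 hF),
    Stmt17.count_pairs hq2 hF φ hφ]
end

section
/- Let q be a prime power, g(x) = x^m + Σ_{i=2}^{m-1} a_i x^i with a_i ∈ F_{q^2} and m ≥ 2, δ ∈ F_{q^2} with δ^{q+1} = 1, s(x) = x^q + δx, and let v be a fixed nonzero element of the image of s. Define 𝔊 = { g(αv) - g(βv) : α, β ∈ F_q, α ≠ β }. (i) For every one-dimensional F_q-subspace ℒ of F_{q^2} with 𝔊 ∩ ℒ = ∅, there exist exactly q(q-1) rank 1 linearized polynomials L (namely those with image ℒ and kernel different from the kernel of s) such that f(x) = g(s(x)) + L(x) is a bijection of F_{q^2}. (ii) Conversely, if 𝔊 ∩ ℒ ≠ ∅ for every one-dimensional F_q-subspace ℒ of F_{q^2}, then there is no rank 1 linearized polynomial L for which g(s(x)) + L(x) is a bijection of F_{q^2}. -/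
open Polynomial

open Polynomial

private lemma aux_frob {F : Type} [Field F] [Fintype F] {q : ℕ} (hq : IsPrimePow q)
    (hF : Fintype.card F = q ^ 2) (x y : F) : (x + y) ^ q = x ^ q + y ^ q := by
  obtain ⟨p, k, hp, hk, rfl⟩ := hq
  have hp' : Nat.Prime p := Nat.prime_iff.mpr hp
  obtain ⟨n, hrc, hcard⟩ := FiniteField.card F (ringChar F)
  have hdvd : p ∣ ringChar F ^ (n : ℕ) := by
    rw [← hcard, hF]
    exact dvd_pow (dvd_pow_self p hk.ne') two_ne_zero
  have hpe : p = ringChar F :=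
    (Nat.prime_dvd_prime_iff_eq hp' hrc).mp (hp'.dvd_of_dvd_pow hdvd)
  haveI : Fact (Nat.Prime p) := ⟨hp'⟩
  haveI : CharP F p := hpe ▸ ringChar.charP F
  exact add_pow_char_pow x y p k

private lemma aux_qsq {F : Type} [Field F] [Fintype F] {q : ℕ}
    (hF : Fintype.card F = q ^ 2) (x : F) : x ^ q ^ 2 = x := by
  rw [← hF]; exact FiniteField.pow_card x

private lemma aux_qmul {q : ℕ} (hq2 : 2 ≤ q) : (q + 1) * (q - 1) = q ^ 2 - 1 := by
  zify [show 1 ≤ q by omega, Nat.one_le_pow 2 q (by omega)]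
  ring

private lemma aux_castsub {q : ℕ} (hq2 : 2 ≤ q) : ((q - 1 : ℕ) : ℤ) = (q : ℤ) - 1 := by
  rw [Nat.cast_sub (by omega)]; push_cast; ring

/-- surjectivity of the (q-1)-power map onto the norm-one circle -/
private lemma aux_surj {F : Type} [Field F] [Fintype F] {q : ℕ} (hq2 : 2 ≤ q)
    (hF : Fintype.card F = q ^ 2) {y : F} (hy : y ^ (q + 1) = 1) :
    ∃ u : F, u ≠ 0 ∧ u ^ (q - 1) = y := by
  classical
  have hy0 : y ≠ 0 := by
    intro h; rw [h, zero_pow (by omega : q + 1 ≠ 0)] at hy; exact zero_ne_one hy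
  obtain ⟨ζ, hζ⟩ := IsCyclic.exists_generator (α := Fˣ)
  have hord : orderOf ζ = q ^ 2 - 1 := by
    rw [orderOf_eq_card_of_forall_mem_zpowers hζ, Nat.card_eq_fintype_card,
      Fintype.card_units, hF]
  obtain ⟨k, hk⟩ := hζ (Units.mk0 y hy0)
  have hk' : ζ ^ k = Units.mk0 y hy0 := hk
  have h1 : ζ ^ (k * ((q : ℤ) + 1)) = 1 := by
    rw [zpow_mul, hk', show ((q : ℤ) + 1) = ((q + 1 : ℕ) : ℤ) by push_cast; ring,
      zpow_natCast]
    ext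
    rw [Units.val_pow_eq_pow_val, Units.val_mk0, hy]
    rfl
  have h2 : ((q ^ 2 - 1 : ℕ) : ℤ) ∣ k * ((q : ℤ) + 1) := by
    rw [← hord]; exact orderOf_dvd_iff_zpow_eq_one.mpr h1
  have hcast : ((q ^ 2 - 1 : ℕ) : ℤ) = ((q : ℤ) + 1) * ((q : ℤ) - 1) := by
    rw [← aux_qmul hq2, Nat.cast_mul, aux_castsub hq2]
    push_cast
    ring
  have h3 : ((q : ℤ) - 1) ∣ k := by
    rw [hcast] at h2
    obtain ⟨t, ht⟩ := h2
    refine ⟨t, ?_⟩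
    have hq1 : ((q : ℤ) + 1) ≠ 0 := by positivity
    apply mul_left_cancel₀ hq1
    rw [mul_comm (k : ℤ)] at ht
    linarith [ht]
  obtain ⟨t, ht⟩ := h3
  have h5 : (ζ ^ t) ^ (q - 1 : ℕ) = Units.mk0 y hy0 := by
    rw [← zpow_natCast (ζ ^ t) (q - 1), ← zpow_mul, ← hk']
    congr 1
    rw [ht, aux_castsub hq2]
    ring
  refine ⟨((ζ ^ t : Fˣ) : F), Units.ne_zero _, ?_⟩
  rw [← Units.val_pow_eq_pow_val, h5, Units.val_mk0]

private lemma aux_cardK {F : Type} [Field F] [Fintype F] {q : ℕ} (hq2 : 2 ≤ q)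
    (hF : Fintype.card F = q ^ 2) : {c : F | c ^ q = c}.ncard = q := by
  classical
  obtain ⟨ζ, hζ⟩ := IsCyclic.exists_generator (α := Fˣ)
  have hord : orderOf ζ = q ^ 2 - 1 := by
    rw [orderOf_eq_card_of_forall_mem_zpowers hζ, Nat.card_eq_fintype_card,
      Fintype.card_units, hF]
  have hdvd : (q + 1) ∣ q ^ 2 - 1 := ⟨q - 1, (aux_qmul hq2).symm⟩
  have hordh : orderOf (ζ ^ (q + 1)) = q - 1 := by
    rw [orderOf_pow, hord, Nat.gcd_eq_right hdvd, ← aux_qmul hq2,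
      Nat.mul_div_cancel_left _ (by omega : 0 < q + 1)]
  have hprim : IsPrimitiveRoot ((ζ ^ (q + 1) : Fˣ) : F) (q - 1) := by
    rw [IsPrimitiveRoot.coe_units_iff, ← hordh]
    exact IsPrimitiveRoot.orderOf _
  have hcardroots : (nthRootsFinset (q - 1) (1 : F)).card = q - 1 :=
    hprim.card_nthRootsFinset
  have hset : {c : F | c ^ q = c} = insert (0 : F) ↑(nthRootsFinset (q - 1) (1 : F)) := by
    ext x
    simp only [Set.mem_setOf_eq, Set.mem_insert_iff, Finset.mem_coe,
      mem_nthRootsFinset (by omega : 0 < q - 1) (1 : F)]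
    constructor
    · intro hx
      rcases eq_or_ne x 0 with h0 | h0
      · exact Or.inl h0
      · right
        have : x ^ (q - 1) * x = 1 * x := by
          rw [one_mul, ← pow_succ, show q - 1 + 1 = q by omega]
          exact hx
        exact mul_right_cancel₀ h0 this
    · rintro (rfl | hx)
      · rw [zero_pow (by omega : q ≠ 0)]
      · calc x ^ q = x ^ (q - 1 + 1) := by rw [show q - 1 + 1 = q by omega]
          _ = x ^ (q - 1) * x := pow_succ _ _
          _ = x := by rw [hx, one_mul]
  rw [hset, Set.ncard_insert_of_notMem, Set.ncard_coe_finset, hcardroots]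
  · omega
  · rw [Finset.mem_coe, mem_nthRootsFinset (by omega : 0 < q - 1) (1 : F)]
    intro h
    rw [zero_pow (by omega : q - 1 ≠ 0)] at h
    exact zero_ne_one h

private def Phi {F : Type} [Field F] (q : ℕ) (u x1 : F) (p : F × F) : F → F :=
  fun x => ((p.1 * x1 - p.2 * u) / (u ^ q * x1 - x1 ^ q * u)) * x ^ q
         + ((p.2 * u ^ q - p.1 * x1 ^ q) / (u ^ q * x1 - x1 ^ q * u)) * x




/-- Let `g(x) = x^m + Σ_{i=2}^{m-1} a_i x^i` with `a_i ∈ F_{q^2}`,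
`m ≥ 2`, `δ^{q+1} = 1`, `s(x) = x^q + δx`, `v` a fixed nonzero element of the image of
`s`, and `𝔊 = { g(αv) - g(βv) : α, β ∈ F_q, α ≠ β }`. (i) For every one-dimensional
`F_q`-subspace `ℒ = F_q·w` (`w ≠ 0`) with `𝔊 ∩ ℒ = ∅`, there exist exactly `q(q-1)`
rank 1 linearized polynomials `L` with image `ℒ` such that `f(x) = g(s(x)) + L(x)` is
a bijection of `F_{q^2}`, namely those with kernel different from `ker s`.
(ii) Conversely, if `𝔊` meets every one-dimensional `F_q`-subspace, then no rank 1
linearized polynomial `L` makes `g(s(x)) + L(x)` a bijection of `F_{q^2}`. -/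
theorem stmt_18 (q : ℕ) (hq : IsPrimePow q)
    (F : Type) [Field F] [Fintype F] (hF : Fintype.card F = q ^ 2)
    (m : ℕ) (hm : 2 ≤ m) (a : ℕ → F)
    (g : F → F) (hg : g = fun t : F => t ^ m + ∑ i ∈ Finset.Ico 2 m, a i * t ^ i)
    (δ : F) (hδ : δ ^ (q + 1) = 1)
    (v : F) (hv0 : v ≠ 0) (hv : ∃ w : F, w ^ q + δ * w = v)
    (𝔊 : Set F)
    (h𝔊 : 𝔊 = {y : F | ∃ α β : F, α ^ q = α ∧ β ^ q = β ∧ α ≠ β ∧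
      y = g (α * v) - g (β * v)}) :
    (∀ w : F, w ≠ 0 →
      𝔊 ∩ {y : F | ∃ c : F, c ^ q = c ∧ y = c * w} = ∅ →
      ({L : F → F |
          (∃ α β : F, α ^ (q + 1) = β ^ (q + 1) ∧ (α, β) ≠ (0, 0) ∧
            L = fun x : F => α * x ^ q + β * x) ∧
          Set.range L = {y : F | ∃ c : F, c ^ q = c ∧ y = c * w} ∧
          Function.Bijective (fun x : F => g (x ^ q + δ * x) + L x)}
        = {L : F → F |
            (∃ α β : F, α ^ (q + 1) = β ^ (q + 1) ∧ (α, β) ≠ (0, 0) ∧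
              L = fun x : F => α * x ^ q + β * x) ∧
            Set.range L = {y : F | ∃ c : F, c ^ q = c ∧ y = c * w} ∧
            {x : F | L x = 0} ≠ {x : F | x ^ q + δ * x = 0}})
      ∧ Set.ncard {L : F → F |
          (∃ α β : F, α ^ (q + 1) = β ^ (q + 1) ∧ (α, β) ≠ (0, 0) ∧
            L = fun x : F => α * x ^ q + β * x) ∧
          Set.range L = {y : F | ∃ c : F, c ^ q = c ∧ y = c * w} ∧
          Function.Bijective (fun x : F => g (x ^ q + δ * x) + L x)}
        = q * (q - 1))
    ∧ ((∀ w : F, w ≠ 0 →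
          𝔊 ∩ {y : F | ∃ c : F, c ^ q = c ∧ y = c * w} ≠ ∅) →
        ¬ ∃ (L : F → F) (α β : F),
          α ^ (q + 1) = β ^ (q + 1) ∧ (α, β) ≠ (0, 0) ∧
          (L = fun x : F => α * x ^ q + β * x) ∧
          Function.Bijective (fun x : F => g (x ^ q + δ * x) + L x)) := by
  classical
  have hq2 : 2 ≤ q := hq.two_le
  have hq0 : q ≠ 0 := by omega
  have hfrob : ∀ x y : F, (x + y) ^ q = x ^ q + y ^ q := aux_frob hq hF
  have h0q : (0 : F) ^ q = 0 := zero_pow hq0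
  have hneg : ∀ x : F, (-x) ^ q = -x ^ q := by
    intro x
    have h := hfrob x (-x)
    rw [add_neg_cancel, h0q] at h
    linear_combination -h
  have hqsq : ∀ x : F, (x ^ q) ^ q = x := by
    intro x
    rw [← pow_mul, ← sq]
    exact aux_qsq hF x
  have hδ0 : δ ≠ 0 := by
    intro h
    rw [h, zero_pow (by omega : q + 1 ≠ 0)] at hδ
    exact zero_ne_one hδ
  have hδq : δ ^ q = δ⁻¹ := by
    have h : δ ^ q * δ = 1 := by rw [← pow_succ]; exact hδ
    exact eq_inv_of_mul_eq_one_left h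
  -- K closure
  have hKsub : ∀ c d : F, c ^ q = c → d ^ q = d → (c - d) ^ q = c - d := by
    intro c d hc hd
    rw [sub_eq_add_neg, hfrob, hneg, hc, hd, ← sub_eq_add_neg]
  have hKadd : ∀ c d : F, c ^ q = c → d ^ q = d → (c + d) ^ q = c + d := by
    intro c d hc hd; rw [hfrob, hc, hd]
  have hKmul : ∀ c d : F, c ^ q = c → d ^ q = d → (c * d) ^ q = c * d := by
    intro c d hc hd; rw [mul_pow, hc, hd]
  have hKdiv : ∀ c d : F, c ^ q = c → d ^ q = d → (c / d) ^ q = c / d := by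
    intro c d hc hd; rw [div_pow, hc, hd]
  -- linearity
  have hlin : ∀ α β c x : F, c ^ q = c → α * (c * x) ^ q + β * (c * x) = c * (α * x ^ q + β * x) := by
    intro α β c x hc; rw [mul_pow, hc]; ring
  have hLsub : ∀ α β x y : F,
      α * (x - y) ^ q + β * (x - y) = (α * x ^ q + β * x) - (α * y ^ q + β * y) := by
    intro α β x y
    rw [sub_eq_add_neg x y, hfrob, hneg]
    ring
  have hLadd : ∀ α β x y : F,
      α * (x + y) ^ q + β * (x + y) = (α * x ^ q + β * x) + (α * y ^ q + β * y) := by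
    intro α β x y; rw [hfrob]; ring
  -- image of s
  have hvq : v ^ q = δ⁻¹ * v := by
    obtain ⟨xv, hxv⟩ := hv
    rw [← hxv, hfrob, mul_pow, hqsq, hδq]
    field_simp
    ring
  have hsq_im : ∀ x : F, (x ^ q + δ * x) ^ q = δ⁻¹ * (x ^ q + δ * x) := by
    intro x
    rw [hfrob, mul_pow, hqsq, hδq]
    field_simp
    ring
  have hrange_s : ∀ x : F, ∃ c : F, c ^ q = c ∧ x ^ q + δ * x = c * v := by
    intro x
    refine ⟨(x ^ q + δ * x) / v, ?_, (div_mul_cancel₀ _ hv0).symm⟩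
    rw [div_pow, hsq_im, hvq, mul_div_mul_left _ _ (inv_ne_zero hδ0)]
  have hrange_s' : ∀ c : F, c ^ q = c → ∃ x : F, x ^ q + δ * x = c * v := by
    intro c hc
    obtain ⟨xv, hxv⟩ := hv
    refine ⟨c * xv, ?_⟩
    have h := hlin 1 δ c xv hc
    rw [one_mul, one_mul] at h
    rw [h, hxv]
  -- kernel element of s
  have hnegδ : (-δ) ^ (q + 1) = 1 := by
    rw [neg_pow, pow_succ, show (-1 : F) ^ q = -1 by
      have := hneg 1; rwa [one_pow] at this]
    rw [hδ]; ring
  obtain ⟨u, hu0, huq⟩ := aux_surj hq2 hF hnegδ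
  have hus : u ^ q + δ * u = 0 := by
    have h : u ^ q = u ^ (q - 1) * u := by
      rw [← pow_succ, show q - 1 + 1 = q by omega]
    rw [h, huq]; ring
  -- kernel existence for rank-1 maps
  have hker_ex : ∀ α β : F, α ≠ 0 → β ≠ 0 → α ^ (q + 1) = β ^ (q + 1) →
      ∃ z : F, z ≠ 0 ∧ α * z ^ q + β * z = 0 := by
    intro α β hα hβ hrank
    have hy : (-(β / α)) ^ (q + 1) = 1 := by
      rw [neg_pow, pow_succ, show (-1 : F) ^ q = -1 by
        have := hneg 1; rwa [one_pow] at this, div_pow, hrank]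
      field_simp
    obtain ⟨z, hz0, hzq⟩ := aux_surj hq2 hF hy
    refine ⟨z, hz0, ?_⟩
    have h : z ^ q = -(β / α) * z := by
      rw [show z ^ q = z ^ (q - 1) * z by rw [← pow_succ, show q - 1 + 1 = q by omega], hzq]
    rw [h]
    field_simp
    ring
  -- kernel characterization
  have hker_eq : ∀ α β : F, α ≠ 0 → β ≠ 0 → ∀ z : F, z ≠ 0 → α * z ^ q + β * z = 0 →
      {x : F | α * x ^ q + β * x = 0} = {y : F | ∃ c : F, c ^ q = c ∧ y = c * z} := by
    intro α β hα hβ z hz0 hz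
    ext x
    simp only [Set.mem_setOf_eq]
    constructor
    · intro hx
      rcases eq_or_ne x 0 with rfl | hx0
      · exact ⟨0, h0q, by ring⟩
      · refine ⟨x / z, ?_, (div_mul_cancel₀ _ hz0).symm⟩
        have hcross : x ^ q * z = x * z ^ q := by
          apply mul_left_cancel₀ hα
          linear_combination z * hx - x * hz
        rw [div_pow, div_eq_div_iff (pow_ne_zero q hz0) hz0]
        exact hcross
    · rintro ⟨c, hc, rfl⟩
      rw [hlin _ _ _ _ hc, hz, mul_zero]
  -- rank-1 maps have both coefficients nonzero
  have hr1nz : ∀ α β : F, α ^ (q + 1) = β ^ (q + 1) → (α, β) ≠ (0, 0) → α ≠ 0 ∧ β ≠ 0 := by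
    intro α β hrank hne
    constructor
    · intro h
      rw [h, zero_pow (by omega : q + 1 ≠ 0)] at hrank
      exact hne (by rw [h, (pow_eq_zero_iff (by omega : q + 1 ≠ 0)).mp hrank.symm])
    · intro h
      rw [h, zero_pow (by omega : q + 1 ≠ 0)] at hrank
      exact hne (by rw [h, (pow_eq_zero_iff (by omega : q + 1 ≠ 0)).mp hrank])
  -- rank-2 maps are injective
  have hrank2_inj : ∀ α β : F, α ^ (q + 1) ≠ β ^ (q + 1) →
      Function.Injective (fun x : F => α * x ^ q + β * x) := by
    intro α β hrank
    have hker0 : ∀ d : F, α * d ^ q + β * d = 0 → d = 0 := by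
      intro d hd
      by_contra hd0
      have E1 : α * d ^ q = -(β * d) := by linear_combination hd
      have E2 : α ^ q * d = -(β ^ q * d ^ q) := by
        calc α ^ q * d = (α * d ^ q) ^ q := by rw [mul_pow, hqsq]
          _ = (-(β * d)) ^ q := by rw [E1]
          _ = -(β ^ q * d ^ q) := by rw [hneg, mul_pow]
      have h6 : (α ^ (q + 1) - β ^ (q + 1)) * d = 0 := by
        rw [pow_succ, pow_succ]
        linear_combination α * E2 - β ^ q * E1
      rcases mul_eq_zero.mp h6 with h7 | h7
      · exact hrank (sub_eq_zero.mp h7)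
      · exact hd0 h7
    intro x y hxy
    simp only at hxy
    have h := hLsub α β x y
    rw [hxy, sub_self] at h
    exact sub_eq_zero.mp (hker0 _ h)

  -- range characterization for rank-1 maps
  have hrange_eq : ∀ α β : F, α ≠ 0 → β ≠ 0 → α ^ (q + 1) = β ^ (q + 1) →
      ∀ z : F, α * z ^ q + β * z ≠ 0 →
      Set.range (fun x : F => α * x ^ q + β * x)
        = {y : F | ∃ c : F, c ^ q = c ∧ y = c * (α * z ^ q + β * z)} := by
    intro α β hα hβ hrank z hz
    have hγ : ∀ x : F, α * (α * x ^ q + β * x) ^ q = β ^ q * (α * x ^ q + β * x) := by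
      intro x
      rw [hfrob, mul_pow, mul_pow, hqsq]
      have hr : α ^ q * α = β ^ q * β := by
        rw [← pow_succ, ← pow_succ]; exact hrank
      linear_combination x * hr
    ext y
    simp only [Set.mem_range, Set.mem_setOf_eq]
    constructor
    · rintro ⟨x, rfl⟩
      refine ⟨(α * x ^ q + β * x) / (α * z ^ q + β * z), ?_, (div_mul_cancel₀ _ hz).symm⟩
      rw [div_pow, div_eq_div_iff (pow_ne_zero q hz) hz]
      apply mul_left_cancel₀ hα
      linear_combination (α * z ^ q + β * z) * hγ x - (α * x ^ q + β * x) * hγ z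
    · rintro ⟨c, hc, rfl⟩
      exact ⟨c * z, hlin α β c z hc⟩
  -- lines
  have hline0 : ∀ w : F, (0 : F) ∈ {y : F | ∃ c : F, c ^ q = c ∧ y = c * w} :=
    fun w => ⟨0, h0q, by ring⟩
  have hlines : ∀ w z : F, z ≠ 0 → (∃ c : F, c ^ q = c ∧ z = c * w) →
      {y : F | ∃ c : F, c ^ q = c ∧ y = c * z} = {y : F | ∃ c : F, c ^ q = c ∧ y = c * w} := by
    rintro w z hz0 ⟨c, hc, hzc⟩
    have hc0 : c ≠ 0 := by rintro rfl; rw [zero_mul] at hzc; exact hz0 hzc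
    ext y
    simp only [Set.mem_setOf_eq]
    constructor
    · rintro ⟨d, hd, rfl⟩
      exact ⟨d * c, hKmul d c hd hc, by rw [hzc]; ring⟩
    · rintro ⟨d, hd, rfl⟩
      refine ⟨d / c, hKdiv d c hd hc, ?_⟩
      rw [hzc]
      field_simp
  have hlineW : ∀ w : F, w ≠ 0 → {y : F | ∃ c : F, c ^ q = c ∧ y = c * w}.ncard = q := by
    intro w hw
    have him : {y : F | ∃ c : F, c ^ q = c ∧ y = c * w}
        = (fun c : F => c * w) '' {c : F | c ^ q = c} := by
      ext y
      simp only [Set.mem_setOf_eq, Set.mem_image]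
      constructor
      · rintro ⟨c, hc, rfl⟩; exact ⟨c, hc, rfl⟩
      · rintro ⟨c, hc, rfl⟩; exact ⟨c, hc, rfl⟩
    rw [him, Set.ncard_image_of_injective _ (fun a b hab => mul_right_cancel₀ hw hab),
      aux_cardK hq2 hF]
  have hcardK' : Fintype.card {c : F // c ^ q = c} = q := by
    have h := aux_cardK hq2 (F := F) hF
    rw [← Nat.card_coe_set_eq, Nat.card_eq_fintype_card] at h
    exact h
  -- basis u, x1
  obtain ⟨x1, hx1⟩ := hv
  have hx1nu : ¬∃ c : F, c ^ q = c ∧ x1 = c * u := by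
    rintro ⟨c, hc, rfl⟩
    apply hv0
    rw [← hx1]
    have h := hlin 1 δ c u hc
    rw [one_mul, one_mul] at h
    rw [h, hus, mul_zero]
  have hx10 : x1 ≠ 0 := by
    rintro rfl
    exact hx1nu ⟨0, h0q, by ring⟩
  have hD : u ^ q * x1 - x1 ^ q * u ≠ 0 := by
    intro hD
    apply hx1nu
    refine ⟨x1 / u, ?_, (div_mul_cancel₀ _ hu0).symm⟩
    rw [div_pow, div_eq_div_iff (pow_ne_zero q hu0) hu0]
    linear_combination -hD
  have hspan : ∀ x : F, ∃ c d : F, c ^ q = c ∧ d ^ q = d ∧ x = c * u + d * x1 := by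
    intro x
    have hinj : Function.Injective (fun p : {c : F // c ^ q = c} × {c : F // c ^ q = c} =>
        p.1.1 * u + p.2.1 * x1) := by
      rintro ⟨⟨c, hc⟩, ⟨d, hd⟩⟩ ⟨⟨c', hc'⟩, ⟨d', hd'⟩⟩ hcd
      simp only at hcd
      have hdd : d = d' := by
        by_contra hne
        apply hx1nu
        refine ⟨(c' - c) / (d - d'), hKdiv _ _ (hKsub _ _ hc' hc) (hKsub _ _ hd hd'), ?_⟩
        rw [div_mul_eq_mul_div, eq_div_iff (sub_ne_zero.mpr hne)]
        linear_combination hcd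
      subst hdd
      have hcc : c = c' := by
        have h : c * u = c' * u := by linear_combination hcd
        exact mul_right_cancel₀ hu0 h
      subst hcc
      rfl
    have hsurj : Function.Surjective (fun p : {c : F // c ^ q = c} × {c : F // c ^ q = c} =>
        p.1.1 * u + p.2.1 * x1) := by
      have hcards : Fintype.card ({c : F // c ^ q = c} × {c : F // c ^ q = c})
          = Fintype.card F := by
        rw [Fintype.card_prod, hcardK', hF, sq]
      exact ((Fintype.bijective_iff_injective_and_card _).mpr ⟨hinj, hcards⟩).surjective
    obtain ⟨⟨⟨c, hc⟩, ⟨d, hd⟩⟩, hp⟩ := hsurj x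
    exact ⟨c, d, hc, hd, hp.symm⟩
  have huniq : ∀ a b a' b' : F, a * u ^ q + b * u = a' * u ^ q + b' * u →
      a * x1 ^ q + b * x1 = a' * x1 ^ q + b' * x1 → a = a' ∧ b = b' := by
    intro a b a' b' e1 e2
    have e3 : (a - a') * (u ^ q * x1 - x1 ^ q * u) = 0 := by
      linear_combination x1 * e1 - u * e2
    have haa : a = a' := by
      rcases mul_eq_zero.mp e3 with h | h
      · exact sub_eq_zero.mp h
      · exact absurd h hD
    subst haa
    refine ⟨rfl, ?_⟩
    have h : b * u = b' * u := by linear_combination e1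
    exact mul_right_cancel₀ hu0 h
  -- Phi properties
  have hΦu : ∀ p : F × F, Phi q u x1 p u = p.1 := by
    intro p
    simp only [Phi]
    field_simp
    have hD' : x1 * u ^ q - x1 ^ q * u ≠ 0 := by rw [mul_comm x1]; exact hD
    linear_combination p.1 * mul_inv_cancel₀ hD'
  have hΦx1 : ∀ p : F × F, Phi q u x1 p x1 = p.2 := by
    intro p
    simp only [Phi]
    field_simp
    have hD' : x1 * u ^ q - x1 ^ q * u ≠ 0 := by rw [mul_comm x1]; exact hD
    linear_combination p.2 * mul_inv_cancel₀ hD'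
  have hPhi_add : ∀ (p : F × F) (x y : F),
      Phi q u x1 p (x + y) = Phi q u x1 p x + Phi q u x1 p y := by
    intro p x y
    simp only [Phi]
    exact hLadd _ _ x y
  have hPhi_lin : ∀ (p : F × F) (c x : F), c ^ q = c →
      Phi q u x1 p (c * x) = c * Phi q u x1 p x := by
    intro p c x hc
    simp only [Phi]
    exact hlin _ _ c x hc
  refine ⟨?_, ?_⟩
  · -- Part (i)
    intro w hw hdisj
    have hdisj' : ∀ y : F, y ∈ 𝔊 → y ∈ {y : F | ∃ c : F, c ^ q = c ∧ y = c * w} → False := by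
      intro y h1 h2
      have hmem : y ∈ (𝔊 ∩ {y : F | ∃ c : F, c ^ q = c ∧ y = c * w}) := ⟨h1, h2⟩
      rw [hdisj] at hmem
      exact hmem
    have hSeq : {L : F → F |
          (∃ α β : F, α ^ (q + 1) = β ^ (q + 1) ∧ (α, β) ≠ (0, 0) ∧
            L = fun x : F => α * x ^ q + β * x) ∧
          Set.range L = {y : F | ∃ c : F, c ^ q = c ∧ y = c * w} ∧
          Function.Bijective (fun x : F => g (x ^ q + δ * x) + L x)}
        = {L : F → F |
            (∃ α β : F, α ^ (q + 1) = β ^ (q + 1) ∧ (α, β) ≠ (0, 0) ∧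
              L = fun x : F => α * x ^ q + β * x) ∧
            Set.range L = {y : F | ∃ c : F, c ^ q = c ∧ y = c * w} ∧
            {x : F | L x = 0} ≠ {x : F | x ^ q + δ * x = 0}} := by
      ext L
      simp only [Set.mem_setOf_eq]
      constructor
      · rintro ⟨⟨α, β, hrank, hne, hLdef⟩, hrangeL, hbij⟩
        refine ⟨⟨α, β, hrank, hne, hLdef⟩, hrangeL, ?_⟩
        intro hker
        have hLu : L u = 0 := by
          have hm : u ∈ {x : F | x ^ q + δ * x = 0} := hus
          rw [← hker] at hm
          exact hm
        have hL0 : L 0 = 0 := by simp only [hLdef]; rw [h0q]; ring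
        have hfeq : (fun x : F => g (x ^ q + δ * x) + L x) u
            = (fun x : F => g (x ^ q + δ * x) + L x) 0 := by
          simp only
          rw [hus, hLu, hL0, show (0 : F) ^ q + δ * 0 = 0 by rw [h0q]; ring]
        exact hu0 (hbij.injective hfeq)
      · rintro ⟨⟨α, β, hrank, hne, hLdef⟩, hrangeL, hker⟩
        refine ⟨⟨α, β, hrank, hne, hLdef⟩, hrangeL, ?_⟩
        obtain ⟨hα, hβ⟩ := hr1nz α β hrank hne
        have hLx : ∀ z : F, L z = α * z ^ q + β * z := fun z => by rw [hLdef]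
        apply Finite.injective_iff_bijective.mp
        intro x y hxy
        simp only at hxy
        obtain ⟨cx, hcx, hsx⟩ := hrange_s x
        obtain ⟨cy, hcy, hsy⟩ := hrange_s y
        by_cases hcc : cx = cy
        · by_contra hne'
          have hsxy : x ^ q + δ * x = y ^ q + δ * y := by rw [hsx, hsy, hcc]
          have hLxy : L x = L y := by
            rw [hsxy] at hxy
            exact add_left_cancel hxy
          have hd0 : x - y ≠ 0 := sub_ne_zero.mpr hne'
          have hLd : α * (x - y) ^ q + β * (x - y) = 0 := by
            rw [hLsub, ← hLx x, ← hLx y, hLxy, sub_self]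
          have hsd' : (x - y) ^ q + δ * (x - y) = 0 := by
            have h := hLsub 1 δ x y
            simp only [one_mul] at h
            rw [h, hsxy, sub_self]
          apply hker
          have hsetL : {z : F | L z = 0}
              = {t : F | ∃ c : F, c ^ q = c ∧ t = c * (x - y)} := by
            have h := hker_eq α β hα hβ (x - y) hd0 hLd
            rw [← h]
            ext z
            simp only [Set.mem_setOf_eq, hLx]
          have hsetS : {z : F | z ^ q + δ * z = 0}
              = {t : F | ∃ c : F, c ^ q = c ∧ t = c * (x - y)} := by
            have h := hker_eq 1 δ one_ne_zero hδ0 (x - y) hd0 (by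
              rw [one_mul]; exact hsd')
            simpa only [one_mul] using h
          rw [hsetL, hsetS]
        · exfalso
          have hy0G : g (cx * v) - g (cy * v) ∈ 𝔊 := by
            rw [h𝔊]; exact ⟨cx, cy, hcx, hcy, hcc, rfl⟩
          have hLyx : L (y - x) = L y - L x := by
            rw [hLx (y - x), hLsub, ← hLx y, ← hLx x]
          have hy0L : g (cx * v) - g (cy * v) ∈ {y : F | ∃ c : F, c ^ q = c ∧ y = c * w} := by
            have heq : g (cx * v) - g (cy * v) = L (y - x) := by
              rw [← hsx, ← hsy, hLyx]
              linear_combination hxy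
            rw [heq, ← hrangeL]
            exact ⟨y - x, rfl⟩
          exact hdisj' _ hy0G hy0L
    refine ⟨hSeq, ?_⟩
    rw [hSeq]
    have hST : {L : F → F |
            (∃ α β : F, α ^ (q + 1) = β ^ (q + 1) ∧ (α, β) ≠ (0, 0) ∧
              L = fun x : F => α * x ^ q + β * x) ∧
            Set.range L = {y : F | ∃ c : F, c ^ q = c ∧ y = c * w} ∧
            {x : F | L x = 0} ≠ {x : F | x ^ q + δ * x = 0}}
        = Phi q u x1 '' (({y : F | ∃ c : F, c ^ q = c ∧ y = c * w} \ {0})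
            ×ˢ {y : F | ∃ c : F, c ^ q = c ∧ y = c * w}) := by
      ext L
      simp only [Set.mem_setOf_eq, Set.mem_image, Set.mem_prod, Set.mem_diff,
        Set.mem_singleton_iff]
      constructor
      · rintro ⟨⟨α, β, hrank, hne, hLdef⟩, hrangeL, hker⟩
        obtain ⟨hα, hβ⟩ := hr1nz α β hrank hne
        have hLx : ∀ z : F, L z = α * z ^ q + β * z := fun z => by rw [hLdef]
        have hLu_mem : L u ∈ {y : F | ∃ c : F, c ^ q = c ∧ y = c * w} := by
          rw [← hrangeL]; exact ⟨u, rfl⟩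
        have hLx1_mem : L x1 ∈ {y : F | ∃ c : F, c ^ q = c ∧ y = c * w} := by
          rw [← hrangeL]; exact ⟨x1, rfl⟩
        have hLu0 : L u ≠ 0 := by
          intro hLu
          apply hker
          have h1 : {z : F | L z = 0} = {y : F | ∃ c : F, c ^ q = c ∧ y = c * u} := by
            have h := hker_eq α β hα hβ u hu0 (by rw [← hLx u]; exact hLu)
            rw [← h]
            ext z
            simp only [Set.mem_setOf_eq, hLx]
          have h2 : {z : F | z ^ q + δ * z = 0}
              = {y : F | ∃ c : F, c ^ q = c ∧ y = c * u} := by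
            have h := hker_eq 1 δ one_ne_zero hδ0 u hu0 (by rw [one_mul]; exact hus)
            simpa only [one_mul] using h
          rw [h1, h2]
        refine ⟨(L u, L x1), ⟨⟨hLu_mem, hLu0⟩, hLx1_mem⟩, ?_⟩
        have e1 : (L u * x1 - L x1 * u) / (u ^ q * x1 - x1 ^ q * u) * u ^ q
            + (L x1 * u ^ q - L u * x1 ^ q) / (u ^ q * x1 - x1 ^ q * u) * u
            = α * u ^ q + β * u := by
          rw [show ((L u * x1 - L x1 * u) / (u ^ q * x1 - x1 ^ q * u) * u ^ q
            + (L x1 * u ^ q - L u * x1 ^ q) / (u ^ q * x1 - x1 ^ q * u) * u : F)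
            = Phi q u x1 (L u, L x1) u from rfl, hΦu (L u, L x1)]
          exact hLx u
        have e2 : (L u * x1 - L x1 * u) / (u ^ q * x1 - x1 ^ q * u) * x1 ^ q
            + (L x1 * u ^ q - L u * x1 ^ q) / (u ^ q * x1 - x1 ^ q * u) * x1
            = α * x1 ^ q + β * x1 := by
          rw [show ((L u * x1 - L x1 * u) / (u ^ q * x1 - x1 ^ q * u) * x1 ^ q
            + (L x1 * u ^ q - L u * x1 ^ q) / (u ^ q * x1 - x1 ^ q * u) * x1 : F)
            = Phi q u x1 (L u, L x1) x1 from rfl, hΦx1 (L u, L x1)]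
          exact hLx x1
        obtain ⟨hA, hB⟩ := huniq _ _ α β e1 e2
        funext z
        show (L u * x1 - L x1 * u) / (u ^ q * x1 - x1 ^ q * u) * z ^ q
            + (L x1 * u ^ q - L u * x1 ^ q) / (u ^ q * x1 - x1 ^ q * u) * z = L z
        rw [hA, hB, ← hLx z]
      · rintro ⟨p, ⟨⟨hp1, hp10⟩, hp2⟩, rfl⟩
        obtain ⟨A, B, hAB⟩ : ∃ A B : F, Phi q u x1 p = fun x : F => A * x ^ q + B * x :=
          ⟨_, _, rfl⟩
        have hLu : Phi q u x1 p u = p.1 := hΦu p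
        have hLx1 : Phi q u x1 p x1 = p.2 := hΦx1 p
        have hrange_sub : ∀ z : F, Phi q u x1 p z ∈ {y : F | ∃ c : F, c ^ q = c ∧ y = c * w} := by
          intro z
          obtain ⟨c, d, hc, hd, rfl⟩ := hspan z
          rw [hPhi_add, hPhi_lin p c u hc, hPhi_lin p d x1 hd, hLu, hLx1]
          obtain ⟨f1, hf1, hp1e⟩ := hp1
          obtain ⟨f2, hf2, hp2e⟩ := hp2
          exact ⟨c * f1 + d * f2, hKadd _ _ (hKmul _ _ hc hf1) (hKmul _ _ hd hf2),
            by rw [hp1e, hp2e]; ring⟩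
        have hnotinj : ¬ Function.Injective (Phi q u x1 p) := by
          intro hinj
          have hcard : Fintype.card {y : F // y ∈ {y : F | ∃ c : F, c ^ q = c ∧ y = c * w}}
              < Fintype.card F := by
            have h1 : Fintype.card {y : F // y ∈ {y : F | ∃ c : F, c ^ q = c ∧ y = c * w}} = q := by
              rw [← Nat.card_eq_fintype_card, Nat.card_coe_set_eq]
              exact hlineW w hw
            rw [h1, hF]
            nlinarith [hq2]
          obtain ⟨z1, z2, hz12, hfz⟩ := Fintype.exists_ne_map_eq_of_card_lt
            (fun z : F => (⟨Phi q u x1 p z, hrange_sub z⟩ :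
              {y : F // y ∈ {y : F | ∃ c : F, c ^ q = c ∧ y = c * w}})) hcard
          have hval : Phi q u x1 p z1 = Phi q u x1 p z2 := congrArg Subtype.val hfz
          exact hz12 (hinj hval)
        have hrank : A ^ (q + 1) = B ^ (q + 1) := by
          by_contra hr
          apply hnotinj
          rw [hAB]
          exact hrank2_inj A B hr
        have hne : (A, B) ≠ (0, 0) := by
          intro h
          apply hp10
          rw [← hLu, hAB]
          simp only
          rw [show A = 0 from congrArg Prod.fst h, show B = 0 from congrArg Prod.snd h]
          ring
        obtain ⟨hA0, hB0⟩ := hr1nz A B hrank hne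
        refine ⟨⟨A, B, hrank, hne, hAB⟩, ?_, ?_⟩
        · have hABu : A * u ^ q + B * u = p.1 := by
            rw [← hLu, hAB]
          have hABu0 : A * u ^ q + B * u ≠ 0 := by rw [hABu]; exact hp10
          have h := hrange_eq A B hA0 hB0 hrank u hABu0
          rw [hAB, h, hABu]
          exact hlines w p.1 hp10 hp1
        · intro hk
          have hm : u ∈ {x : F | x ^ q + δ * x = 0} := hus
          rw [← hk] at hm
          apply hp10
          rw [← hLu]
          exact hm
    rw [hST, Set.ncard_image_of_injOn]
    · have hprod : (({y : F | ∃ c : F, c ^ q = c ∧ y = c * w} \ {0})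
            ×ˢ {y : F | ∃ c : F, c ^ q = c ∧ y = c * w}).ncard
          = ({y : F | ∃ c : F, c ^ q = c ∧ y = c * w} \ {0}).ncard
            * {y : F | ∃ c : F, c ^ q = c ∧ y = c * w}.ncard := by
        rw [Set.ncard_eq_toFinset_card', Set.toFinset_prod, Finset.card_product,
          ← Set.ncard_eq_toFinset_card', ← Set.ncard_eq_toFinset_card']
      rw [hprod, hlineW w hw,
        Set.ncard_diff_singleton_of_mem (hline0 w), hlineW w hw]
      exact Nat.mul_comm _ _
    · intro p hp p' hp' hpp
      have h1 : p.1 = p'.1 := by rw [← hΦu p, ← hΦu p', hpp]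
      have h2 : p.2 = p'.2 := by rw [← hΦx1 p, ← hΦx1 p', hpp]
      exact Prod.ext h1 h2
  · -- Part (ii)
    intro hmeet
    rintro ⟨L, α, β, hrank, hne, hLdef, hbij⟩
    obtain ⟨hα, hβ⟩ := hr1nz α β hrank hne
    have hLx : ∀ z : F, L z = α * z ^ q + β * z := fun z => by rw [hLdef]
    have hL0 : L 0 = 0 := by rw [hLx]; rw [h0q]; ring
    by_cases hker : {x : F | L x = 0} = {x : F | x ^ q + δ * x = 0}
    · have hLu : L u = 0 := by
        have hm : u ∈ {x : F | x ^ q + δ * x = 0} := hus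
        rw [← hker] at hm
        exact hm
      have hfeq : (fun x : F => g (x ^ q + δ * x) + L x) u
          = (fun x : F => g (x ^ q + δ * x) + L x) 0 := by
        simp only
        rw [hus, hLu, hL0, show (0 : F) ^ q + δ * 0 = 0 by rw [h0q]; ring]
      exact hu0 (hbij.injective hfeq)
    · have hLu0 : L u ≠ 0 := by
        intro hLu
        apply hker
        have h1 : {z : F | L z = 0} = {y : F | ∃ c : F, c ^ q = c ∧ y = c * u} := by
          have h := hker_eq α β hα hβ u hu0 (by rw [← hLx u]; exact hLu)
          rw [← h]
          ext z
          simp only [Set.mem_setOf_eq, hLx]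
        have h2 : {z : F | z ^ q + δ * z = 0}
            = {y : F | ∃ c : F, c ^ q = c ∧ y = c * u} := by
          have h := hker_eq 1 δ one_ne_zero hδ0 u hu0 (by rw [one_mul]; exact hus)
          simpa only [one_mul] using h
        rw [h1, h2]
      have hrangeL : Set.range L = {y : F | ∃ c : F, c ^ q = c ∧ y = c * L u} := by
        have h := hrange_eq α β hα hβ hrank u (by rw [← hLx u]; exact hLu0)
        rw [← hLx u] at h
        conv_lhs => rw [hLdef]
        exact h
      obtain ⟨y0, hy0G, hy0L⟩ := Set.nonempty_iff_ne_empty.mpr (hmeet (L u) hLu0)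
      rw [h𝔊] at hy0G
      obtain ⟨c1, c2, hc1, hc2, hc12, hy0eq⟩ := hy0G
      obtain ⟨c0, hc0, hy0c⟩ := hy0L
      obtain ⟨x, hx⟩ := hrange_s' c1 hc1
      obtain ⟨u0, hsu0v⟩ := hrange_s' (c2 - c1) (hKsub c2 c1 hc2 hc1)
      have hLu0mem : L u0 ∈ {y : F | ∃ c : F, c ^ q = c ∧ y = c * L u} := by
        rw [← hrangeL]; exact ⟨u0, rfl⟩
      obtain ⟨d0, hd0K, hLu0d⟩ := hLu0mem
      have htK : (c0 - d0) ^ q = c0 - d0 := hKsub c0 d0 hc0 hd0K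
      have hLadd' : ∀ x y : F, L (x + y) = L x + L y := by
        intro x y
        simp only [hLdef]
        exact hLadd α β x y
      have hLlinK : ∀ c x : F, c ^ q = c → L (c * x) = c * L x := by
        intro c x hc
        simp only [hLdef]
        exact hlin α β c x hc
      have hLsum : L (u0 + (c0 - d0) * u) = y0 := by
        rw [hLadd', hLlinK (c0 - d0) u htK, hLu0d, hy0c]
        ring
      have hstu : ((c0 - d0) * u) ^ q + δ * ((c0 - d0) * u) = 0 := by
        have h := hlin 1 δ (c0 - d0) u htK
        simp only [one_mul] at h
        rw [h, hus, mul_zero]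
      have hsx' : (x + (u0 + (c0 - d0) * u)) ^ q + δ * (x + (u0 + (c0 - d0) * u))
          = c2 * v := by
        have hadd : ∀ a b : F, (a + b) ^ q + δ * (a + b)
            = (a ^ q + δ * a) + (b ^ q + δ * b) := by
          intro a b; rw [hfrob]; ring
        rw [hadd, hadd, hx, hsu0v, hstu]
        ring
      have hfeq : (fun x : F => g (x ^ q + δ * x) + L x) (x + (u0 + (c0 - d0) * u))
          = (fun x : F => g (x ^ q + δ * x) + L x) x := by
        simp only
        rw [hsx', hx, hLadd', hLsum, hy0eq]
        ring
      have hinj := hbij.injective hfeq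
      have hzero : u0 + (c0 - d0) * u = 0 := by linear_combination hinj
      have hsu00 : u0 ^ q + δ * u0 = 0 := by
        have hu0e : u0 = -((c0 - d0) * u) := by linear_combination hzero
        rw [hu0e, hneg]
        linear_combination -hstu
      have hc2c1 : (c2 - c1) * v = 0 := by rw [← hsu0v]; exact hsu00
      rcases mul_eq_zero.mp hc2c1 with h | h
      · exact hc12 (sub_eq_zero.mp h).symm
      · exact hv0 h
end

section
/- Let q be a prime power, g(x) = x^m + Σ_{i=2}^{m-1} a_i x^i with a_i ∈ F_{q^2} and m ≥ 2, δ ∈ F_{q^2} with δ^{q+1} = 1, s(x) = x^q + δx, and let v be a fixed nonzero element of the image of s. Define ℌ = { (g(αv) - g(βv))/(β - α) : α, β ∈ F_q, α ≠ β }. (i) For every one-dimensional F_q-subspace ℒ of F_{q^2} and every b ∈ F_{q^2} with b ∉ ℒ such that ℌ ∩ (b + ℒ) = ∅, there exist q(q-1) distinct rank 2 linearized polynomials L of F_{q^2} such that f(x) = g(s(x)) + L(x) is a bijection of F_{q^2}. (ii) Conversely, if ℌ ∩ (b + ℒ) ≠ ∅ for every one-dimensional F_q-subspace ℒ of F_{q^2}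 and every b ∈ F_{q^2} with b ∉ ℒ, then there is no rank 2 linearized polynomial L for which g(s(x)) + L(x) is a bijection of F_{q^2}. -/
open Finset


lemma auxA1 {F : Type} [Field F] [Fintype F] (n : ℕ) (hn : n ≠ 0) (cst : F) :
    Nat.card {x : F // x ^ n = cst} ≤ n := by
  classical
  rw [Nat.card_eq_fintype_card, Fintype.card_subtype]
  set P : Polynomial F := Polynomial.X ^ n - Polynomial.C cst with hP
  have hP0 : P ≠ 0 := by
    intro h
    have := Polynomial.natDegree_X_pow_sub_C (n := n) (r := cst)
    rw [← hP, h, Polynomial.natDegree_zero] at this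
    exact hn this.symm
  have hsub : (univ.filter fun x : F => x ^ n = cst) ⊆ P.roots.toFinset := by
    intro x hx
    simp only [mem_filter] at hx
    rw [Multiset.mem_toFinset, Polynomial.mem_roots hP0]
    simp [hP, Polynomial.IsRoot, hx.2]
  calc (univ.filter fun x : F => x ^ n = cst).card ≤ P.roots.toFinset.card :=
        Finset.card_le_card hsub
    _ ≤ Multiset.card P.roots := Multiset.toFinset_card_le _
    _ ≤ P.natDegree := Polynomial.card_roots' P
    _ = n := Polynomial.natDegree_X_pow_sub_C

lemma auxA2 {F : Type} [Field F] [Fintype F] (q : ℕ) (hq2 : 2 ≤ q)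
    (hF : Fintype.card F = q ^ 2) :
    Nat.card ((powMonoidHom (q - 1) : Fˣ →* Fˣ).ker) = q - 1 ∧
      ∀ t : F, t ^ (q + 1) = 1 → ∃ z : F, z ≠ 0 ∧ z ^ (q - 1) = t := by
  classical
  set ψ : Fˣ →* Fˣ := powMonoidHom (q - 1) with hψ
  have hq1 : q - 1 ≠ 0 := by omega
  have hqq : (q - 1) * (q + 1) = q ^ 2 - 1 := by
    obtain ⟨r, rfl⟩ : ∃ r, q = r + 2 := ⟨q - 2, by omega⟩
    have h1 : (r + 2) ^ 2 = (r+1) * (r+3) + 1 := by ring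
    have h2 : (r + 2) - 1 = r + 1 := rfl
    rw [h1, Nat.add_sub_cancel, h2]
  have hcardU : Nat.card Fˣ = q ^ 2 - 1 := by
    rw [Nat.card_eq_fintype_card, Fintype.card_units, hF]
  -- kernel bound
  have kermem : ∀ u : Fˣ, u ∈ ψ.ker ↔ u ^ (q - 1) = 1 := by
    intro u; rw [MonoidHom.mem_ker, hψ]; rfl
  have hker_le : Nat.card ψ.ker ≤ q - 1 := by
    have hinj : Function.Injective (fun u : ψ.ker =>
        (⟨((u : Fˣ) : F), by
          have := (kermem u).mp u.2
          have := congrArg (Units.val) this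
          simpa [Units.val_pow_eq_pow_val] using this⟩ :
          {x : F // x ^ (q - 1) = 1})) := by
      intro u1 u2 h
      rw [Subtype.ext_iff] at h ⊢
      exact Units.ext h
    exact le_trans (Nat.card_le_card_of_injective _ hinj) (auxA1 _ hq1 _)
  -- range bound
  have hrange_le : Nat.card ψ.range ≤ q + 1 := by
    have hinj : Function.Injective (fun u : ψ.range =>
        (⟨((u : Fˣ) : F), by
          obtain ⟨w, hw⟩ := u.2
          have : (u : Fˣ) ^ (q + 1) = 1 := by
            rw [← hw]
            show (w ^ (q-1)) ^ (q+1) = 1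
            rw [← pow_mul, hqq, ← hcardU]
            exact pow_card_eq_one'
          have := congrArg (Units.val) this
          simpa [Units.val_pow_eq_pow_val] using this⟩ :
          {x : F // x ^ (q + 1) = 1})) := by
      intro u1 u2 h
      rw [Subtype.ext_iff] at h ⊢
      exact Units.ext h
    exact le_trans (Nat.card_le_card_of_injective _ hinj) (auxA1 _ (by omega) _)
  have hprod : Nat.card ψ.range * Nat.card ψ.ker = q ^ 2 - 1 := by
    rw [← hcardU, ← Nat.card_congr (QuotientGroup.quotientKerEquivRange ψ).toEquiv]
    exact (Subgroup.card_eq_card_quotient_mul_card_subgroup ψ.ker).symm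
  have hkerpos : 0 < Nat.card ψ.ker := Nat.card_pos
  have hrangeeq : Nat.card ψ.range = q + 1 := by
    have h1 : (q+1) * (q-1) ≤ Nat.card ψ.range * (q-1) := by
      calc (q+1)*(q-1) = q^2 - 1 := by rw [mul_comm]; exact hqq
        _ = Nat.card ψ.range * Nat.card ψ.ker := hprod.symm
        _ ≤ Nat.card ψ.range * (q-1) := Nat.mul_le_mul_left _ hker_le
    have := Nat.le_of_mul_le_mul_right h1 (by omega)
    omega
  have hkereq : Nat.card ψ.ker = q - 1 := by
    have h2 := hprod
    rw [hrangeeq] at h2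
    exact Nat.eq_of_mul_eq_mul_left (show 0 < q + 1 by omega)
      (h2.trans (by rw [← hqq, mul_comm]))
  refine ⟨hkereq, ?_⟩
  -- surjectivity onto (q+1)-th roots of unity
  intro t ht
  have ht0 : t ≠ 0 := by intro h; rw [h] at ht; simp at ht
  classical
  let θ : ψ.range → {x : F // x ^ (q + 1) = 1} := fun u =>
    ⟨((u : Fˣ) : F), by
      obtain ⟨w, hw⟩ := u.2
      have h1 : (u : Fˣ) ^ (q + 1) = 1 := by
        rw [← hw]
        show (w ^ (q-1)) ^ (q+1) = 1
        rw [← pow_mul, hqq, ← hcardU]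
        exact pow_card_eq_one'
      have := congrArg (Units.val) h1
      simpa [Units.val_pow_eq_pow_val] using this⟩
  have hθinj : Function.Injective θ := by
    intro u1 u2 h
    rw [Subtype.ext_iff] at h ⊢
    exact Units.ext h
  have hcards : Fintype.card ψ.range = Fintype.card {x : F // x ^ (q + 1) = 1} := by
    have hle1 : Fintype.card ψ.range ≤ Fintype.card {x : F // x ^ (q + 1) = 1} :=
      Fintype.card_le_of_injective θ hθinj
    have hle2 : Fintype.card {x : F // x ^ (q + 1) = 1} ≤ q + 1 := by
      rw [← Nat.card_eq_fintype_card]; exact auxA1 _ (by omega) _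
    have h3 : Fintype.card ψ.range = q + 1 := by
      rw [← Nat.card_eq_fintype_card]; exact hrangeeq
    omega
  have hθsurj : Function.Surjective θ :=
    ((Fintype.bijective_iff_injective_and_card θ).mpr ⟨hθinj, hcards⟩).2
  obtain ⟨u, hu⟩ := hθsurj ⟨t, ht⟩
  obtain ⟨w, hw⟩ := u.2
  refine ⟨(w : F), Units.ne_zero w, ?_⟩
  have h1 : ((u : Fˣ) : F) = t := congrArg Subtype.val hu
  have h2 : (w : Fˣ) ^ (q - 1) = u := hw
  have := congrArg Units.val h2
  rw [Units.val_pow_eq_pow_val] at this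
  rw [this, h1]

lemma auxA3 {F : Type} [Field F] [Fintype F] (q : ℕ) (hq2 : 2 ≤ q)
    (hF : Fintype.card F = q ^ 2) [DecidablePred fun x : F => x ^ q = x] :
    (Finset.univ.filter fun x : F => x ^ q = x).card = q := by
  classical
  set ψ : Fˣ →* Fˣ := powMonoidHom (q - 1) with hψ
  have kermem : ∀ u : Fˣ, u ∈ ψ.ker ↔ u ^ (q - 1) = 1 := by
    intro u; rw [MonoidHom.mem_ker, hψ]; rfl
  have hker := (auxA2 q hq2 hF).1
  have hcard2 : (Finset.univ.filter fun x : F => x ≠ 0 ∧ x ^ (q-1) = 1).card = q - 1 := by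
    have e1 : Nat.card {x : F // x ≠ 0 ∧ x ^ (q-1) = 1} ≤ Nat.card ψ.ker := by
      refine Nat.card_le_card_of_injective (fun x =>
        ⟨Units.mk0 x.1 x.2.1, by
          rw [kermem]
          ext
          rw [Units.val_pow_eq_pow_val]
          exact x.2.2⟩) ?_
      intro x1 x2 h
      rw [Subtype.ext_iff] at h ⊢
      exact congrArg Units.val h
    have e2 : Nat.card ψ.ker ≤ Nat.card {x : F // x ≠ 0 ∧ x ^ (q-1) = 1} := by
      refine Nat.card_le_card_of_injective (fun u =>
        ⟨((u : Fˣ) : F), Units.ne_zero _, by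
          have := congrArg Units.val ((kermem _).mp u.2)
          simpa [Units.val_pow_eq_pow_val] using this⟩) ?_
      intro u1 u2 h
      rw [Subtype.ext_iff] at h
      exact Subtype.ext (Units.ext h)
    have e3 : Nat.card {x : F // x ≠ 0 ∧ x ^ (q-1) = 1} = q - 1 :=
      le_antisymm (e1.trans hker.le) (hker.ge.trans e2)
    rw [← Fintype.card_subtype, ← Nat.card_eq_fintype_card]
    exact e3
  have hseteq : (Finset.univ.filter fun x : F => x ^ q = x)
      = insert (0:F) (Finset.univ.filter fun x : F => x ≠ 0 ∧ x ^ (q-1) = 1) := by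
    ext x
    simp only [mem_filter, mem_univ, true_and, mem_insert]
    constructor
    · intro hx
      by_cases hx0 : x = 0
      · exact Or.inl hx0
      · refine Or.inr ⟨hx0, ?_⟩
        have hq' : q - 1 + 1 = q := by omega
        have : x ^ (q-1) * x = 1 * x := by
          rw [← pow_succ, hq', hx, one_mul]
        exact mul_right_cancel₀ hx0 this
    · rintro (rfl | ⟨hx0, hx1⟩)
      · exact zero_pow (by omega)
      · have hq' : q - 1 + 1 = q := by omega
        rw [← hq', pow_succ, hx1, one_mul]
  rw [hseteq, Finset.card_insert_of_notMem (by simp)]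
  omega

/-- Let `g(x) = x^m + Σ_{i=2}^{m-1} a_i x^i` with `a_i ∈ F_{q^2}`,
`m ≥ 2`, `δ^{q+1} = 1`, `s(x) = x^q + δx`, `v` a fixed nonzero element of the image of
`s`, and `ℌ = { (g(αv) - g(βv))/(β - α) : α, β ∈ F_q, α ≠ β }`. (i) For every
one-dimensional `F_q`-subspace `ℒ = F_q·w` (`w ≠ 0`) and every `b ∉ ℒ` with
`ℌ ∩ (b + ℒ) = ∅`, there exist `q(q-1)` distinct rank 2 linearized polynomials `L`
such that `f(x) = g(s(x)) + L(x)` is a bijection of `F_{q^2}`. (ii) Conversely, if `ℌ`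
meets every such nontrivial affine line `b + ℒ`, then no rank 2 linearized polynomial
`L` makes `g(s(x)) + L(x)` a bijection of `F_{q^2}`. -/
theorem stmt_19 (q : ℕ) (hq : IsPrimePow q)
    (F : Type) [Field F] [Fintype F] (hF : Fintype.card F = q ^ 2)
    (m : ℕ) (hm : 2 ≤ m) (a : ℕ → F)
    (g : F → F) (hg : g = fun t : F => t ^ m + ∑ i ∈ Finset.Ico 2 m, a i * t ^ i)
    (δ : F) (hδ : δ ^ (q + 1) = 1)
    (v : F) (hv0 : v ≠ 0) (hv : ∃ w : F, w ^ q + δ * w = v)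
    (ℌ : Set F)
    (hℌ : ℌ = {y : F | ∃ α β : F, α ^ q = α ∧ β ^ q = β ∧ α ≠ β ∧
      y = (g (α * v) - g (β * v)) / (β - α)}) :
    (∀ w b : F, w ≠ 0 →
      (¬ ∃ c : F, c ^ q = c ∧ b = c * w) →
      ℌ ∩ {y : F | ∃ c : F, c ^ q = c ∧ y = b + c * w} = ∅ →
      ∃ S : Finset (F → F), S.card = q * (q - 1) ∧
        ∀ L ∈ S, (∃ α' β' : F, β' ^ (q + 1) ≠ α' ^ (q + 1) ∧
            L = fun x : F => α' * x ^ q + β' * x) ∧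
          Function.Bijective (fun x : F => g (x ^ q + δ * x) + L x))
    ∧ ((∀ w b : F, w ≠ 0 →
          (¬ ∃ c : F, c ^ q = c ∧ b = c * w) →
          ℌ ∩ {y : F | ∃ c : F, c ^ q = c ∧ y = b + c * w} ≠ ∅) →
        ¬ ∃ (L : F → F) (α' β' : F),
          β' ^ (q + 1) ≠ α' ^ (q + 1) ∧
          (L = fun x : F => α' * x ^ q + β' * x) ∧
          Function.Bijective (fun x : F => g (x ^ q + δ * x) + L x)) := by
  classical
  obtain ⟨p, k, hpp, hk0, hpk⟩ := hq
  have hp : Nat.Prime p := hpp.nat_prime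
  haveI : Fact p.Prime := ⟨hp⟩
  have hq2 : 2 ≤ q := by
    calc 2 ≤ p := hp.two_le
    _ ≤ p ^ k := Nat.le_self_pow hk0.ne' p
    _ = q := hpk
  haveI charF : CharP F p := by
    obtain ⟨n, hrp, hcard⟩ := FiniteField.card F (ringChar F)
    have hpr : p = ringChar F := by
      have hdvd : p ∣ (ringChar F) ^ (n : ℕ) := by
        rw [← hcard, hF, ← hpk, ← pow_mul]
        exact dvd_pow_self p (by positivity)
      exact (Nat.prime_dvd_prime_iff_eq hp hrp).mp (hp.dvd_of_dvd_pow hdvd)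
    rw [hpr]; exact ringChar.charP F
  have fadd : ∀ x y : F, (x + y) ^ q = x ^ q + y ^ q := by
    intro x y; rw [← hpk]; exact add_pow_char_pow x y p k
  have fsub : ∀ x y : F, (x - y) ^ q = x ^ q - y ^ q := by
    intro x y; rw [← hpk]; exact sub_pow_char_pow x y k
  have hnegone : (-1 : F) ^ q = -1 := by
    rw [← hpk]; exact neg_one_pow_char_pow F p k
  have fneg : ∀ x : F, (-x) ^ q = -x ^ q := by
    intro x
    calc (-x) ^ q = ((-1) * x) ^ q := by ring_nf
    _ = (-1 : F) ^ q * x ^ q := mul_pow _ _ _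
    _ = -x ^ q := by rw [hnegone]; ring
  have fq2 : ∀ x : F, (x ^ q) ^ q = x := by
    intro x
    have h : q * q = Fintype.card F := by rw [hF]; ring
    rw [← pow_mul, h]
    exact FiniteField.pow_card x
  have hδ0 : δ ≠ 0 := by
    intro h; rw [h, zero_pow (by omega : q + 1 ≠ 0)] at hδ
    exact zero_ne_one hδ
  have hδq : δ ^ q * δ = 1 := by rw [← pow_succ]; exact hδ
  obtain ⟨w₀, hw₀⟩ := hv
  have hvq : v ^ q * δ = v := by
    rw [← hw₀]
    rw [fadd]
    have h1 : (δ * w₀) ^ q = δ ^ q * w₀ ^ q := mul_pow _ _ _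
    rw [h1, fq2]
    linear_combination w₀ ^ q * hδq
  have hEim : ∀ x : F, ∃ γ : F, γ ^ q = γ ∧ x ^ q + δ * x = γ * v := by
    intro x
    refine ⟨(x ^ q + δ * x) / v, ?_, by field_simp⟩
    rw [div_pow, fadd, mul_pow, fq2]
    rw [div_eq_div_iff (pow_ne_zero _ hv0) hv0]
    linear_combination (-(x + δ ^ q * x ^ q)) * hvq + x ^ q * v ^ q * hδq
  have hsurj := (auxA2 q hq2 hF).2
  have hδneg : (-δ) ^ (q + 1) = 1 := by
    have h : (-δ) = (-1) * δ := by ring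
    rw [h, mul_pow, hδ, mul_one, pow_succ, hnegone]
    ring
  obtain ⟨k₀, hk₀0, hk₀p⟩ := hsurj (-δ) hδneg
  have hk₀q : k₀ ^ q = -(δ * k₀) := by
    conv_lhs => rw [show q = (q - 1) + 1 by omega]
    rw [pow_succ, hk₀p]
    ring
  have hsk₀ : k₀ ^ q + δ * k₀ = 0 := by rw [hk₀q]; ring
  have Linj : ∀ A B : F, B ^ (q+1) ≠ A ^ (q+1) → ∀ z : F, A * z ^ q + B * z = 0 → z = 0 := by
    intro A B hAB z hz
    by_contra hz0
    apply hAB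
    have h1 : A * z ^ q = -(B * z) := by linear_combination hz
    have h2 : (A * z ^ q) ^ q = (-(B * z)) ^ q := by rw [h1]
    rw [mul_pow, fq2, fneg, mul_pow] at h2
    have h3 : (A * z ^ q) * (A ^ q * z) = (-(B * z)) * (-(B ^ q * z ^ q)) := by
      rw [h1, h2]
    have hz1 : z ^ q * z ≠ 0 := mul_ne_zero (pow_ne_zero _ hz0) hz0
    have h4 : B ^ (q+1) * (z ^ q * z) = A ^ (q+1) * (z ^ q * z) := by
      rw [pow_succ, pow_succ]
      linear_combination -h3
    exact mul_right_cancel₀ hz1 h4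
  have slin : ∀ c₁ c₂ : F, c₁ ^ q = c₁ → c₂ ^ q = c₂ →
      (c₁ * k₀ + c₂ * w₀) ^ q + δ * (c₁ * k₀ + c₂ * w₀) = c₂ * v := by
    intro c₁ c₂ hc₁ hc₂
    rw [fadd, mul_pow, mul_pow, hc₁, hc₂]
    linear_combination c₁ * hsk₀ + c₂ * hw₀
  have Espan : ∀ z : F, ∃ c₁ c₂ : F, c₁ ^ q = c₁ ∧ c₂ ^ q = c₂ ∧ z = c₁ * k₀ + c₂ * w₀ := by
    set E : Finset F := univ.filter (fun x => x ^ q = x) with hEdef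
    have hE : E.card = q := auxA3 q hq2 hF
    have hmemE : ∀ x : F, x ∈ E ↔ x ^ q = x := by intro x; simp [hEdef]
    set T : Finset F := (E ×ˢ E).image (fun cc => cc.1 * k₀ + cc.2 * w₀) with hTdef
    have hinj : Set.InjOn (fun cc : F × F => cc.1 * k₀ + cc.2 * w₀) ↑(E ×ˢ E) := by
      rintro ⟨c₁, c₂⟩ hc ⟨d₁, d₂⟩ hd h
      rw [Finset.mem_coe, Finset.mem_product, hmemE, hmemE] at hc hd
      simp only at h
      have h2 : c₂ * v = d₂ * v := by
        rw [← slin c₁ c₂ hc.1 hc.2, ← slin d₁ d₂ hd.1 hd.2, h]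
      have hc₂ : c₂ = d₂ := mul_right_cancel₀ hv0 h2
      have hc₁ : c₁ = d₁ := by
        have : c₁ * k₀ = d₁ * k₀ := by rw [hc₂] at h; linear_combination h
        exact mul_right_cancel₀ hk₀0 this
      simp [hc₁, hc₂]
    have hTcard : T.card = q * q := by
      rw [hTdef, Finset.card_image_of_injOn hinj, Finset.card_product, hE]
    have hTuniv : T = univ := by
      apply Finset.eq_univ_of_card
      rw [hTcard, hF]
      ring
    intro z
    have hz : z ∈ T := by rw [hTuniv]; exact mem_univ z
    rw [hTdef, Finset.mem_image] at hz
    obtain ⟨⟨c₁, c₂⟩, hcc, hccz⟩ := hz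
    rw [Finset.mem_product, hmemE, hmemE] at hcc
    exact ⟨c₁, c₂, hcc.1, hcc.2, hccz.symm⟩
  -- the key equivalence
  have key : ∀ A B : F, B ^ (q+1) ≠ A ^ (q+1) →
      (Function.Bijective (fun x : F => g (x ^ q + δ * x) + (A * x ^ q + B * x)) ↔
        ℌ ∩ {y : F | ∃ c : F, c ^ q = c ∧
          y = (A * w₀ ^ q + B * w₀) + c * (A * k₀ ^ q + B * k₀)} = ∅) := by
    intro A B hAB
    constructor
    · intro hbij
      rw [Set.eq_empty_iff_forall_notMem]
      rintro y ⟨hy1, c, hc, hy2⟩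
      rw [hℌ] at hy1
      obtain ⟨α, β, hα, hβ, hαβ, hy⟩ := hy1
      have hαβ' : α - β ≠ 0 := sub_ne_zero.mpr hαβ
      have hβα' : β - α ≠ 0 := sub_ne_zero.mpr (Ne.symm hαβ)
      have hαβq : (α - β) ^ q = α - β := by rw [fsub, hα, hβ]
      obtain ⟨u, hu⟩ : ∃ u : F, u = w₀ + c * k₀ := ⟨_, rfl⟩
      have huq : u ^ q = w₀ ^ q + c * k₀ ^ q := by rw [hu, fadd, mul_pow, hc]
      have hsu : u ^ q + δ * u = v := by
        rw [huq, hu]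
        linear_combination hw₀ + c * hsk₀
      have hu0 : u ≠ 0 := by
        intro h
        rw [h, zero_pow (by omega : q ≠ 0), mul_zero, add_zero] at hsu
        exact hv0 hsu.symm
      obtain ⟨x, hx⟩ : ∃ x : F, x = β * w₀ + (α - β) * u := ⟨_, rfl⟩
      obtain ⟨yy, hyy⟩ : ∃ yy : F, yy = β * w₀ := ⟨_, rfl⟩
      have hxy : x ≠ yy := by
        rw [hx, hyy]
        intro h
        have h2 : (α - β) * u = 0 := by linear_combination h
        rcases mul_eq_zero.mp h2 with h' | h'
        · exact hαβ' h'
        · exact hu0 h'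
      have hxeq : x = yy + (α - β) * u := by rw [hx, hyy]
      have hyyq : yy ^ q = β * w₀ ^ q := by rw [hyy, mul_pow, hβ]
      have hsyy : yy ^ q + δ * yy = β * v := by
        rw [hyyq, hyy]
        linear_combination β * hw₀
      have hxq : x ^ q = yy ^ q + (α - β) * u ^ q := by
        rw [hxeq, fadd, mul_pow, hαβq]
      have hsx : x ^ q + δ * x = α * v := by
        rw [hxq, hxeq]
        linear_combination hsyy + (α - β) * hsu
      have hyval : (α - β) * y = g (β * v) - g (α * v) := by
        rw [hy]
        field_simp
        ring
      have hfeq : g (x ^ q + δ * x) + (A * x ^ q + B * x)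
          = g (yy ^ q + δ * yy) + (A * yy ^ q + B * yy) := by
        rw [hsx, hsyy]
        linear_combination A * hxq + B * hxeq + hyval - (α - β) * hy2 +
          (α - β) * A * huq + (α - β) * B * hu
      exact hxy (hbij.injective hfeq)
    · intro hdisj
      rw [Set.eq_empty_iff_forall_notMem] at hdisj
      rw [← Finite.injective_iff_bijective]
      intro x y hxy
      simp only at hxy
      by_cases hxy0 : x = y
      · exact hxy0
      exfalso
      obtain ⟨α, hα, hsx⟩ := hEim x
      obtain ⟨β, hβ, hsy⟩ := hEim y
      by_cases hab : α = β
      · rw [hab] at hsx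
        rw [hsx, hsy] at hxy
        have h1 : A * (x - y) ^ q + B * (x - y) = 0 := by
          rw [fsub]
          linear_combination hxy
        exact hxy0 (sub_eq_zero.mp (Linj A B hAB (x - y) h1))
      · have hαβ' : α - β ≠ 0 := sub_ne_zero.mpr hab
        have hβα' : β - α ≠ 0 := sub_ne_zero.mpr (Ne.symm hab)
        have hαβq : (α - β) ^ q = α - β := by rw [fsub, hα, hβ]
        have hinv : ((α - β)⁻¹) ^ q = (α - β)⁻¹ := by rw [inv_pow, hαβq]
        obtain ⟨z, hz⟩ : ∃ z : F, z = x - y := ⟨_, rfl⟩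
        have hzq : z ^ q = x ^ q - y ^ q := by rw [hz, fsub]
        have hsz : z ^ q + δ * z = (α - β) * v := by
          rw [hzq, hz]
          linear_combination hsx - hsy
        obtain ⟨u, hu⟩ : ∃ u : F, u = (α - β)⁻¹ * z := ⟨_, rfl⟩
        have huq : u ^ q = (α - β)⁻¹ * z ^ q := by rw [hu, mul_pow, hinv]
        have hsu : u ^ q + δ * u = v := by
          rw [huq, hu]
          have h2 : (α - β)⁻¹ * (z ^ q) + δ * ((α - β)⁻¹ * z)
              = (α - β)⁻¹ * (z ^ q + δ * z) := by ring
          rw [h2, hsz, inv_mul_cancel_left₀ hαβ']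
        obtain ⟨c, hc0⟩ : ∃ c : F, c = (u - w₀) / k₀ := ⟨_, rfl⟩
        have hceq : u = w₀ + c * k₀ := by
          rw [hc0, div_mul_cancel₀ _ hk₀0]
          ring
        have huw : (u - w₀) ^ q = -δ * (u - w₀) := by
          rw [fsub]
          linear_combination hsu - hw₀
        have hc : c ^ q = c := by
          rw [hc0, div_pow, huw, hk₀q]
          rw [show -(δ * k₀) = -δ * k₀ by ring]
          rw [mul_div_mul_left _ _ (by simpa using hδ0 : -δ ≠ 0)]
        have huq2 : u ^ q = w₀ ^ q + c * k₀ ^ q := by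
          conv_lhs => rw [hceq]
          rw [fadd, mul_pow, hc]
        have hLz : A * z ^ q + B * z = g (β * v) - g (α * v) := by
          have hxy' := hxy
          rw [hsx, hsy] at hxy'
          rw [hzq, hz]
          linear_combination hxy'
        have e1 : A * u ^ q + B * u = (α - β)⁻¹ * (A * z ^ q + B * z) := by
          rw [huq, hu]
          ring
        apply hdisj (A * u ^ q + B * u)
        constructor
        · rw [hℌ]
          refine ⟨α, β, hα, hβ, hab, ?_⟩
          rw [e1, hLz]
          field_simp
          ring
        · refine ⟨c, hc, ?_⟩
          rw [huq2]
          conv_lhs => rw [hceq]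
          ring
  constructor
  · -- Part (i)
    intro ww b hww hnb hdisj
    have hE : (univ.filter (fun x : F => x ^ q = x)).card = q := auxA3 q hq2 hF
    set E : Finset F := univ.filter (fun x : F => x ^ q = x) with hEdef
    have hmemE : ∀ x : F, x ∈ E ↔ x ^ q = x := by intro x; simp [hEdef]
    obtain ⟨D, hD⟩ : ∃ D : F, D = k₀ ^ q * w₀ - w₀ ^ q * k₀ := ⟨_, rfl⟩
    have hDv : D = -(v * k₀) := by
      rw [hD]
      linear_combination w₀ * hsk₀ - k₀ * hw₀
    have hD0 : D ≠ 0 := by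
      rw [hDv]
      intro h
      rcases mul_eq_zero.mp (neg_eq_zero.mp h) with h' | h'
      · exact hv0 h'
      · exact hk₀0 h'
    -- coefficient formulas
    have hLk : ∀ u₁ u₂ : F,
        ((u₁ * w₀ - u₂ * k₀) / D) * k₀ ^ q + ((u₂ * k₀ ^ q - u₁ * w₀ ^ q) / D) * k₀ = u₁ := by
      intro u₁ u₂
      field_simp
      linear_combination (-u₁) * hD
    have hLw : ∀ u₁ u₂ : F,
        ((u₁ * w₀ - u₂ * k₀) / D) * w₀ ^ q + ((u₂ * k₀ ^ q - u₁ * w₀ ^ q) / D) * w₀ = u₂ := by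
      intro u₁ u₂
      field_simp
      linear_combination (-u₂) * hD
    refine ⟨((E.erase 0) ×ˢ E).image (fun cc : F × F =>
      (fun x : F => ((cc.1 * ww * w₀ - (b + cc.2 * ww) * k₀) / D) * x ^ q +
        (((b + cc.2 * ww) * k₀ ^ q - cc.1 * ww * w₀ ^ q) / D) * x)), ?_, ?_⟩
    · rw [Finset.card_image_of_injOn, Finset.card_product, Finset.card_erase_of_mem, hE,
        mul_comm]
      · rw [hmemE]
        exact zero_pow (by omega : q ≠ 0)
      · rintro ⟨c, c'⟩ hcc ⟨d, d'⟩ hdd h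
        simp only at h
        have h1 := congrFun h k₀
        have h2 := congrFun h w₀
        rw [hLk (c * ww) (b + c' * ww), hLk (d * ww) (b + d' * ww)] at h1
        rw [hLw (c * ww) (b + c' * ww), hLw (d * ww) (b + d' * ww)] at h2
        have hcd : c = d := mul_right_cancel₀ hww h1
        have hcd' : c' = d' := by
          have : c' * ww = d' * ww := by linear_combination h2
          exact mul_right_cancel₀ hww this
        simp [hcd, hcd']
    · intro L hL
      rw [Finset.mem_image] at hL
      obtain ⟨⟨c, c'⟩, hcc, rfl⟩ := hL
      rw [Finset.mem_product, Finset.mem_erase, hmemE, hmemE] at hcc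
      obtain ⟨⟨hc0, hc⟩, hc'⟩ := hcc
      obtain ⟨A, hA⟩ : ∃ A : F, A = (c * ww * w₀ - (b + c' * ww) * k₀) / D := ⟨_, rfl⟩
      obtain ⟨B, hB⟩ : ∃ B : F, B = ((b + c' * ww) * k₀ ^ q - c * ww * w₀ ^ q) / D := ⟨_, rfl⟩
      have hLk' : A * k₀ ^ q + B * k₀ = c * ww := by rw [hA, hB]; exact hLk _ _
      have hLw' : A * w₀ ^ q + B * w₀ = b + c' * ww := by rw [hA, hB]; exact hLw _ _
      have hrank : B ^ (q + 1) ≠ A ^ (q + 1) := by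
        intro hBA
        have hzex : ∃ z : F, z ≠ 0 ∧ A * z ^ q + B * z = 0 := by
          by_cases hA0 : A = 0
          · have hB0 : B = 0 := by
              have : B ^ (q + 1) = 0 := by rw [hBA, hA0]; exact zero_pow (by omega)
              exact pow_eq_zero_iff (by omega : q + 1 ≠ 0) |>.mp this
            exact ⟨1, one_ne_zero, by rw [hA0, hB0]; ring⟩
          · have hB0 : B ≠ 0 := by
              intro h
              rw [h, zero_pow (by omega : q + 1 ≠ 0)] at hBA
              exact hA0 (pow_eq_zero_iff (by omega : q + 1 ≠ 0) |>.mp hBA.symm)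
            have ht : (-(B / A)) ^ (q + 1) = 1 := by
              rw [show -(B / A) = (-1) * (B / A) by ring, mul_pow, pow_succ, hnegone,
                div_pow, hBA, div_self (pow_ne_zero _ hA0)]
              ring
            obtain ⟨z, hz0, hzp⟩ := hsurj _ ht
            refine ⟨z, hz0, ?_⟩
            have hzq : z ^ q = -(B / A) * z := by
              conv_lhs => rw [show q = (q - 1) + 1 by omega]
              rw [pow_succ, hzp]
            rw [hzq]
            field_simp
            ring
        obtain ⟨z, hz0, hLz0⟩ := hzex
        obtain ⟨c₁, c₂, hc₁, hc₂, hzspan⟩ := Espan z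
        rw [hzspan, fadd, mul_pow, mul_pow, hc₁, hc₂] at hLz0
        have hval : c₁ * (c * ww) + c₂ * (b + c' * ww) = 0 := by
          rw [← hLk', ← hLw']
          linear_combination hLz0
        by_cases hc₂0 : c₂ = 0
        · have hc₁0 : c₁ ≠ 0 := by
            intro h
            rw [h, hc₂0] at hzspan
            simp at hzspan
            exact hz0 hzspan
          rw [hc₂0] at hval
          have : c₁ * (c * ww) = 0 := by linear_combination hval
          rcases mul_eq_zero.mp this with h' | h'
          · exact hc₁0 h'
          · rcases mul_eq_zero.mp h' with h'' | h''
            · exact hc0 h''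
            · exact hww h''
        · apply hnb
          refine ⟨-(c₁ * c + c₂ * c') / c₂, ?_, ?_⟩
          · rw [div_pow, fneg, fadd, mul_pow, mul_pow, hc₁, hc₂, hc, hc']
          · field_simp
            linear_combination hval
      refine ⟨⟨A, B, hrank, by rw [hA, hB]⟩, ?_⟩
      have hdisj2 : ℌ ∩ {y : F | ∃ c : F, c ^ q = c ∧
          y = (A * w₀ ^ q + B * w₀) + c * (A * k₀ ^ q + B * k₀)} = ∅ := by
        rw [Set.eq_empty_iff_forall_notMem]
        rintro y ⟨hy1, c'', hc'', hyv⟩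
        rw [Set.eq_empty_iff_forall_notMem] at hdisj
        apply hdisj y
        refine ⟨hy1, c' + c'' * c, ?_, ?_⟩
        · rw [fadd, mul_pow, hc', hc'', hc]
        · rw [hyv, hLw', hLk']
          ring
      have hbij := (key A B hrank).mpr hdisj2
      simp only [← hA, ← hB]
      exact hbij
  · -- Part (ii)
    intro Hall
    rintro ⟨L, A, B, hAB, hL, hbij⟩
    subst hL
    have hbij' : Function.Bijective
        (fun x : F => g (x ^ q + δ * x) + (A * x ^ q + B * x)) := hbij
    have hdisj := (key A B hAB).mp hbij'
    have hLk₀ : A * k₀ ^ q + B * k₀ ≠ 0 := by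
      intro h
      exact hk₀0 (Linj A B hAB k₀ h)
    have hnotline : ¬ ∃ c : F, c ^ q = c ∧
        A * w₀ ^ q + B * w₀ = c * (A * k₀ ^ q + B * k₀) := by
      rintro ⟨c, hc, hcl⟩
      have h1 : A * (w₀ - c * k₀) ^ q + B * (w₀ - c * k₀) = 0 := by
        rw [fsub, mul_pow, hc]
        linear_combination hcl
      have h2 := Linj A B hAB _ h1
      have h3 : w₀ = c * k₀ := by linear_combination h2
      have h4 : v = 0 := by
        rw [← hw₀, h3, mul_pow, hc]
        linear_combination c * hsk₀
      exact hv0 h4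
    exact Hall (A * k₀ ^ q + B * k₀) (A * w₀ ^ q + B * w₀) hLk₀ hnotline hdisj
end
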